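/- arXiv:0907.0232 — 7 statements merged into one kernel-verified Lean document; each statement's English description precedes it below -/
import Mathlib

section
/- Let n ≥ 2 be an integer, let ε ∈ (0,1), let σ₀ > 1, and let η > 0, C < ∞. Let V₀, V₁ : (0,∞) → ℝ be smooth functions such that: (i) F[V₀] = 0 on (0,∞); (ii) −σ·V₀'(σ) ≥ η·σ² for all σ ∈ (0, σ₀); (iii) dF_{V₀}[V₁](σ) = −σ·V₀'(σ) for all σ > 0; (iv) |V₁(σ)| + |σ·V₁'(σ)| + |Q[V₁](σ)| ≤ C·σ² for all σ ∈ (0, σ₀). Then there exists t_* ∈ (0, 1/e) such that the function v(r,t) = V₀(r/θ(t)) + (1−ε)·θ(t)θ'(t)·V₁(r/θ(t)) satisfies ∂_t v(r,t) ≥ F[v(·,t)](r) for all (r,t) with 0 < r < σ₀·θ(t) and 0 < t < t_*. -/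
open Real Set Filter

/-- The quasilinear operator `F[v](σ) = v v'' - (1/2)(v')² + ((n-1-v)/σ) v' + (2(n-1)/σ²) v (1-v)`. -/
noncomputable def Fop (n : ℕ) (v : ℝ → ℝ) (r : ℝ) : ℝ :=
  v r * deriv (deriv v) r - (1/2) * (deriv v r)^2
    + (((n : ℝ) - 1 - v r) / r) * deriv v r
    + (2 * ((n : ℝ) - 1) / r^2) * v r * (1 - v r)

/-- The linearization `dF_V[W]` of `F` at `V`. -/
noncomputable def dFop (n : ℕ) (V W : ℝ → ℝ) (σ : ℝ) : ℝ :=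
  V σ * deriv (deriv W) σ
    + ((((n:ℝ) - 1 - V σ) / σ) - deriv V σ) * deriv W σ
    + (deriv (deriv V) σ - deriv V σ / σ + (2 * ((n:ℝ) - 1) / σ^2) * (1 - 2 * V σ)) * W σ

/-- The quadratic part `Q[V]` of `F`. -/
noncomputable def Qop (n : ℕ) (V : ℝ → ℝ) (σ : ℝ) : ℝ :=
  V σ * deriv (deriv V) σ - (1/2) * (deriv V σ)^2 - V σ * deriv V σ / σ
    - (2 * ((n:ℝ) - 1) / σ^2) * (V σ)^2

/-- `θ(t) = √(t/(-log t))`. -/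
noncomputable def theta (t : ℝ) : ℝ := Real.sqrt (t / (-Real.log t))

/-- `θ(t)·θ'(t) = (1/2)(1/(-log t) + 1/(log t)²)`. -/
noncomputable def thetaThetaPrime (t : ℝ) : ℝ :=
  (1/2) * (1 / (-Real.log t) + 1 / (Real.log t)^2)

lemma theta_pos {t : ℝ} (h0 : 0 < t) (h1 : t < 1) : 0 < theta t := by
  have := Real.log_neg h0 h1
  exact Real.sqrt_pos.2 (div_pos h0 (by linarith))

lemma theta_sq {t : ℝ} (h0 : 0 < t) (h1 : t < 1) : (theta t)^2 = t / (-Real.log t) := by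
  have := Real.log_neg h0 h1
  exact Real.sq_sqrt (le_of_lt (div_pos h0 (by linarith)))

lemma hasDerivAt_theta {t : ℝ} (h0 : 0 < t) (h1 : t < 1) :
    HasDerivAt theta (thetaThetaPrime t / theta t) t := by
  have hl := Real.log_neg h0 h1
  have hlne : Real.log t ≠ 0 := ne_of_lt hl
  have hgt : t / (-Real.log t) > 0 := div_pos h0 (by linarith)
  have hg : HasDerivAt (fun s => s / (-Real.log s))
      ((1 * (-Real.log t) - t * (-t⁻¹)) / (-Real.log t)^2) t :=
    (hasDerivAt_id t).div ((Real.hasDerivAt_log (ne_of_gt h0)).neg) (by simpa using hlne)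
  have hs : HasDerivAt (fun s => Real.sqrt (s / (-Real.log s)))
      ((1 * (-Real.log t) - t * (-t⁻¹)) / (-Real.log t)^2 / (2 * Real.sqrt (t / (-Real.log t)))) t :=
    hg.sqrt (ne_of_gt hgt)
  have hval : (1 * (-Real.log t) - t * (-t⁻¹)) / (-Real.log t)^2 = 2 * thetaThetaPrime t := by
    rw [thetaThetaPrime, show ((-Real.log t)^2 = (Real.log t)^2) by ring,
      show ((1:ℝ)/(-Real.log t) = -(1/Real.log t)) from by ring]
    field_simp
    ring
  have hθ : Real.sqrt (t / (-Real.log t)) = theta t := rfl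
  rw [hval, hθ, show (2 * thetaThetaPrime t / (2 * theta t) = thetaThetaPrime t / theta t) by
    rw [mul_div_mul_left _ _ (two_ne_zero)]] at hs
  exact hs

lemma hasDerivAt_ttp {t : ℝ} (h0 : 0 < t) (h1 : t < 1) :
    HasDerivAt thetaThetaPrime ((1/(2*t)) * (1/(Real.log t)^2 + 2/(-Real.log t)^3)) t := by
  have hl := Real.log_neg h0 h1
  have hlne : Real.log t ≠ 0 := ne_of_lt hl
  have htne : t ≠ 0 := ne_of_gt h0
  have h1d : HasDerivAt (fun s => 1 / (-Real.log s))
      ((0 * (-Real.log t) - 1 * (-t⁻¹)) / (-Real.log t)^2) t :=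
    (hasDerivAt_const t (1:ℝ)).div ((Real.hasDerivAt_log htne).neg) (by simpa using hlne)
  have h2d : HasDerivAt (fun s => 1 / (Real.log s)^2)
      ((0 * (Real.log t)^2 - 1 * (2 * Real.log t ^ 1 * t⁻¹)) / ((Real.log t)^2)^2) t :=
    (hasDerivAt_const t (1:ℝ)).div ((Real.hasDerivAt_log htne).pow 2) (by positivity)
  have hsum := ((h1d.add h2d).const_mul (1/2 : ℝ))
  have heq : thetaThetaPrime = fun s => (1/2) * (1 / (-Real.log s) + 1 / (Real.log s)^2) := rfl
  rw [heq]
  refine hsum.congr_deriv ?_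
  rw [show ((-Real.log t)^2 = (Real.log t)^2) by ring,
      show ((-Real.log t)^3 = -(Real.log t)^3) by ring, div_neg]
  field_simp
  ring

lemma diffAt {V : ℝ → ℝ} (hV : ContDiffOn ℝ (⊤ : ℕ∞) V (Ioi 0)) {x : ℝ} (hx : 0 < x) :
    DifferentiableAt ℝ V x :=
  (hV.differentiableOn (by simp)).differentiableAt (isOpen_Ioi.mem_nhds hx)

lemma diffAt_deriv {V : ℝ → ℝ} (hV : ContDiffOn ℝ (⊤ : ℕ∞) V (Ioi 0)) {x : ℝ} (hx : 0 < x) :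
    DifferentiableAt ℝ (deriv V) x :=
  (((hV.deriv_of_isOpen (m := (⊤ : ℕ∞)) isOpen_Ioi (by simp)).differentiableOn (by simp)).differentiableAt
    (isOpen_Ioi.mem_nhds hx))

set_option maxHeartbeats 1000000 in
/-- Inner-region supersolution: if `F[V₀] = 0`, `-σV₀' ≥ ησ²` on `(0,σ₀)`,
`dF_{V₀}[V₁] = -σV₀'`, and `|V₁| + |σV₁'| + |Q[V₁]| ≤ Cσ²` on `(0,σ₀)`, then there is
`t_* ∈ (0,1/e)` such that `v(r,t) = V₀(r/θ) + (1-ε)θθ' V₁(r/θ)` is a supersolution of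
`v_t = F[v]` for `0 < r < σ₀ θ(t)`, `0 < t < t_*`. -/
theorem stmt7 (n : ℕ) (hn : 2 ≤ n) (ε : ℝ) (hε : ε ∈ Ioo (0:ℝ) 1)
    (σ₀ : ℝ) (hσ₀ : 1 < σ₀) (η C : ℝ) (hη : 0 < η)
    (V₀ V₁ : ℝ → ℝ)
    (hV₀ : ContDiffOn ℝ (⊤ : ℕ∞) V₀ (Ioi 0)) (hV₁ : ContDiffOn ℝ (⊤ : ℕ∞) V₁ (Ioi 0))
    (hi : ∀ σ : ℝ, 0 < σ → Fop n V₀ σ = 0)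
    (hii : ∀ σ ∈ Ioo (0:ℝ) σ₀, η * σ^2 ≤ -(σ * deriv V₀ σ))
    (hiii : ∀ σ : ℝ, 0 < σ → dFop n V₀ V₁ σ = -(σ * deriv V₀ σ))
    (hiv : ∀ σ ∈ Ioo (0:ℝ) σ₀, |V₁ σ| + |σ * deriv V₁ σ| + |Qop n V₁ σ| ≤ C * σ^2) :
    ∃ tstar ∈ Ioo (0:ℝ) (Real.exp (-1)),
      ∀ r t : ℝ, 0 < r → r < σ₀ * theta t → 0 < t → t < tstar →
        Fop n (fun ρ => V₀ (ρ / theta t) + (1 - ε) * thetaThetaPrime t * V₁ (ρ / theta t)) r ≤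
          deriv (fun s => V₀ (r / theta s) + (1 - ε) * thetaThetaPrime s * V₁ (r / theta s)) t := by
  obtain ⟨hε0, hε1⟩ := hε
  have hεη : 0 < ε * η := mul_pos hε0 hη
  have hC : 0 ≤ C := by
    have h1 := hiv 1 ⟨one_pos, hσ₀⟩
    have a1 := abs_nonneg (V₁ 1)
    have a2 := abs_nonneg ((1:ℝ) * deriv V₁ 1)
    have a3 := abs_nonneg (Qop n V₁ 1)
    nlinarith
  set L₀ : ℝ := 2 + 6 * (C + 1) / (ε * η) with hL₀def
  have hfrac : 0 < 6 * (C + 1) / (ε * η) := div_pos (by linarith) hεη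
  have hL₀2 : 2 < L₀ := by rw [hL₀def]; linarith
  refine ⟨Real.exp (-L₀), ⟨Real.exp_pos _, Real.exp_lt_exp.2 (by linarith)⟩, ?_⟩
  intro r t hr hrθ ht0 htst
  -- basic facts about t
  have hlt : Real.log t < -L₀ := by
    have h := Real.log_lt_log ht0 htst
    rwa [Real.log_exp] at h
  have ht1 : t < 1 := lt_trans htst (by
    rw [show (1:ℝ) = Real.exp 0 by simp]
    exact Real.exp_lt_exp.2 (by linarith))
  set L : ℝ := -Real.log t with hLdef
  have hLL : L₀ < L := by rw [hLdef]; linarith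
  have hL2 : 2 < L := lt_trans hL₀2 hLL
  have hLpos : 0 < L := by linarith
  have hLne : L ≠ 0 := ne_of_gt hLpos
  have hlogne : Real.log t ≠ 0 := ne_of_lt (by nlinarith [Real.log_neg ht0 ht1])
  set c := theta t with hcdef
  have hcpos : 0 < c := theta_pos ht0 ht1
  have hcne : c ≠ 0 := ne_of_gt hcpos
  have hc2 : c^2 = t / L := by rw [hcdef, hLdef]; exact theta_sq ht0 ht1
  set σ := r / c with hσdef
  have hσpos : 0 < σ := div_pos hr hcpos
  have hσne : σ ≠ 0 := ne_of_gt hσpos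
  have hσlt : σ < σ₀ := by rw [hσdef]; exact (div_lt_iff₀ hcpos).2 (by linarith [hrθ])
  have hσmem : σ ∈ Ioo (0:ℝ) σ₀ := ⟨hσpos, hσlt⟩
  have hrc : r = σ * c := by rw [hσdef]; field_simp
  -- b = θθ'(t)
  set b := thetaThetaPrime t with hbdef
  have hbval : b = (L+1)/(2*L^2) := by
    rw [hbdef]; simp only [thetaThetaPrime]
    rw [show (Real.log t)^2 = L^2 by rw [hLdef]; ring, ← hLdef]
    field_simp
  have hL2pos : (0:ℝ) < 2*L^2 := by nlinarith [pow_pos hLpos 2]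
  have hbpos : 0 < b := by rw [hbval]; exact div_pos (by linarith) hL2pos
  -- u = 1/L and bounds
  set u := 1/L with hudef
  have hupos : 0 < u := by rw [hudef]; exact div_pos one_pos hLpos
  have hLu : L * u = 1 := by rw [hudef]; field_simp
  have hb_low : u/2 ≤ b := by
    have h : b - u/2 = 1/(2*L^2) := by rw [hbval, hudef]; field_simp; ring
    have h2 : 0 < 1/(2*L^2) := div_pos one_pos hL2pos
    linarith
  have hb_up : b ≤ u := by
    have h : u - b = (L-1)/(2*L^2) := by rw [hbval, hudef]; field_simp; ring
    have h2 : 0 ≤ (L-1)/(2*L^2) := div_nonneg (by linarith) hL2pos.le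
    linarith
  -- bp = (θθ')'(t)
  have httpd : HasDerivAt thetaThetaPrime ((L+2)/(2*t*L^3)) t := by
    have h := hasDerivAt_ttp ht0 ht1
    convert h using 1
    rw [show (Real.log t)^2 = L^2 by rw [hLdef]; ring,
        show (-Real.log t)^3 = L^3 by rw [hLdef]]
    field_simp
  set bp := (L+2)/(2*t*L^3) with hbpdef
  have hL3pos : (0:ℝ) < 2*t*L^3 := by nlinarith [pow_pos hLpos 3]
  have hbppos : 0 < bp := by rw [hbpdef]; exact div_pos (by linarith) hL3pos
  have hc2bp : c^2 * bp = (L+2)/(2*L^4) := by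
    rw [hc2, hbpdef]
    field_simp
  have hL4pos : (0:ℝ) < 2*L^4 := by nlinarith [pow_pos hLpos 4]
  have hK : c^2 * bp ≤ u^2 := by
    have h : u^2 - c^2*bp = (2*L^2 - L - 2)/(2*L^4) := by
      rw [hc2bp, hudef]; field_simp; ring
    have h2 : 0 ≤ (2*L^2 - L - 2)/(2*L^4) := div_nonneg (by nlinarith) hL4pos.le
    linarith
  have hKpos : 0 < c^2 * bp := mul_pos (pow_pos hcpos 2) hbppos
  -- key smallness
  have hkey : 6 * C * u ≤ ε * η := by
    have h2 : ε * η * L₀ = 2 * (ε * η) + 6 * (C + 1) := by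
      rw [hL₀def]; field_simp
    have h3 : ε * η * L₀ ≤ ε * η * L := mul_le_mul_of_nonneg_left hLL.le hεη.le
    have h1 : 6 * C ≤ ε * η * L := by linarith
    calc 6 * C * u ≤ (ε * η * L) * u := mul_le_mul_of_nonneg_right h1 hupos.le
    _ = ε * η := by rw [mul_assoc, hLu, mul_one]
  -- differentiability at σ
  have hdV₀ : DifferentiableAt ℝ V₀ σ := diffAt hV₀ hσpos
  have hdV₁ : DifferentiableAt ℝ V₁ σ := diffAt hV₁ hσpos
  set a := (1-ε) * b with hadef
  have hapos : 0 < a := by rw [hadef]; exact mul_pos (by linarith) hbpos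
  have ha_le_b : a ≤ b := by rw [hadef]; nlinarith [mul_pos hε0 hbpos]
  -- spatial derivatives
  have hinner : ∀ ρ : ℝ, HasDerivAt (fun x => x / c) (1/c) ρ := by
    intro ρ
    simpa using (hasDerivAt_id ρ).div_const c
  have hcomp0 : ∀ ρ : ℝ, 0 < ρ → HasDerivAt (fun x => V₀ (x/c)) (deriv V₀ (ρ/c) * (1/c)) ρ :=
    fun ρ hρ => ((diffAt hV₀ (div_pos hρ hcpos)).hasDerivAt).comp ρ (hinner ρ)
  have hcomp1 : ∀ ρ : ℝ, 0 < ρ → HasDerivAt (fun x => V₁ (x/c)) (deriv V₁ (ρ/c) * (1/c)) ρ :=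
    fun ρ hρ => ((diffAt hV₁ (div_pos hρ hcpos)).hasDerivAt).comp ρ (hinner ρ)
  have hvd : ∀ ρ : ℝ, 0 < ρ → HasDerivAt (fun x => V₀ (x/c) + a * V₁ (x/c))
      (deriv V₀ (ρ/c) * (1/c) + a * (deriv V₁ (ρ/c) * (1/c))) ρ :=
    fun ρ hρ => (hcomp0 ρ hρ).add ((hcomp1 ρ hρ).const_mul a)
  have hder1 : deriv (fun x => V₀ (x/c) + a * V₁ (x/c)) r
      = deriv V₀ σ * (1/c) + a * (deriv V₁ σ * (1/c)) := by
    rw [hσdef]; exact (hvd r hr).deriv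
  have hev : deriv (fun x => V₀ (x/c) + a * V₁ (x/c))
      =ᶠ[nhds r] (fun ρ => deriv V₀ (ρ/c) * (1/c) + a * (deriv V₁ (ρ/c) * (1/c))) := by
    filter_upwards [isOpen_Ioi.mem_nhds (show r ∈ Ioi 0 from hr)] with ρ hρ
    exact (hvd ρ hρ).deriv
  have hdd2 : HasDerivAt (fun ρ => deriv V₀ (ρ/c) * (1/c) + a * (deriv V₁ (ρ/c) * (1/c)))
      ((deriv (deriv V₀) (r/c) * (1/c)) * (1/c) + a * ((deriv (deriv V₁) (r/c) * (1/c)) * (1/c))) r := by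
    have h0 : HasDerivAt (fun ρ => deriv V₀ (ρ/c)) (deriv (deriv V₀) (r/c) * (1/c)) r :=
      by have := ((diffAt_deriv hV₀ (div_pos hr hcpos)).hasDerivAt).comp r (hinner r); exact this
    have h1 : HasDerivAt (fun ρ => deriv V₁ (ρ/c)) (deriv (deriv V₁) (r/c) * (1/c)) r :=
      by have := ((diffAt_deriv hV₁ (div_pos hr hcpos)).hasDerivAt).comp r (hinner r); exact this
    exact (h0.mul_const (1/c)).add ((h1.mul_const (1/c)).const_mul a)
  have hder2 : deriv (deriv (fun x => V₀ (x/c) + a * V₁ (x/c))) r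
      = (deriv (deriv V₀) σ * (1/c)) * (1/c) + a * ((deriv (deriv V₁) σ * (1/c)) * (1/c)) := by
    rw [hσdef, hev.deriv_eq]
    exact hdd2.deriv
  have hsplit : Fop n (fun x => V₀ (x/c) + a * V₁ (x/c)) r
      = (Fop n V₀ σ + a * dFop n V₀ V₁ σ + a^2 * Qop n V₁ σ) / c^2 := by
    simp only [Fop, dFop, Qop]
    rw [hder1, hder2, ← hσdef, hrc]
    have hσc : σ * c ≠ 0 := mul_ne_zero hσne hcne
    field_simp
    ring
  have hLHS : Fop n (fun x => V₀ (x/c) + a * V₁ (x/c)) r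
      = (a * (-(σ * deriv V₀ σ)) + a^2 * Qop n V₁ σ) / c^2 := by
    rw [hsplit, hi σ hσpos, hiii σ hσpos, zero_add]
  -- time derivative
  have hθd : HasDerivAt theta (b / c) t := by
    rw [hbdef, hcdef]; exact hasDerivAt_theta ht0 ht1
  have hinnert : HasDerivAt (fun s => r / theta s) (-(σ * b) / c^2) t := by
    have h := (hasDerivAt_const t r).div hθd hcne
    refine h.congr_deriv ?_
    rw [hrc, ← hcdef]
    field_simp
    ring
  have hV₀t : HasDerivAt (fun s => V₀ (r / theta s)) (deriv V₀ σ * (-(σ * b) / c^2)) t :=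
    hdV₀.hasDerivAt.comp t hinnert
  have hV₁t : HasDerivAt (fun s => V₁ (r / theta s)) (deriv V₁ σ * (-(σ * b) / c^2)) t :=
    hdV₁.hasDerivAt.comp t hinnert
  have httpd' : HasDerivAt (fun s => (1-ε) * thetaThetaPrime s) ((1-ε) * bp) t :=
    httpd.const_mul (1-ε)
  have hprod : HasDerivAt (fun s => (1-ε) * thetaThetaPrime s * V₁ (r / theta s))
      ((1-ε) * bp * V₁ σ + a * (deriv V₁ σ * (-(σ * b) / c^2))) t :=
    httpd'.mul hV₁t
  have hRHS : deriv (fun s => V₀ (r / theta s) + (1-ε) * thetaThetaPrime s * V₁ (r / theta s)) t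
      = deriv V₀ σ * (-(σ * b) / c^2)
        + ((1-ε) * bp * V₁ σ + a * (deriv V₁ σ * (-(σ * b) / c^2))) :=
    (hV₀t.add hprod).deriv
  rw [hLHS, hRHS, div_le_iff₀ (show (0:ℝ) < c^2 from pow_pos hcpos 2)]
  have hYc : (deriv V₀ σ * (-(σ * b) / c^2)
        + ((1-ε) * bp * V₁ σ + a * (deriv V₁ σ * (-(σ * b) / c^2)))) * c^2
      = b * (-(σ * deriv V₀ σ)) + (1-ε) * (c^2 * bp) * V₁ σ
        + a * b * (-(σ * deriv V₁ σ)) := by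
    field_simp
    ring
  rw [hYc]
  clear_value L₀ L c σ b u bp a
  clear hev hvd hdd2 hder1 hder2 hsplit hLHS hRHS hθd hinnert hV₀t hV₁t httpd httpd' hprod hcomp0 hcomp1 hinner hYc
  -- final estimates
  have hP := hii σ hσmem
  have habs := hiv σ hσmem
  have hQb : |Qop n V₁ σ| ≤ C * σ^2 := by
    have b1 := abs_nonneg (V₁ σ); have b2 := abs_nonneg (σ * deriv V₁ σ); linarith
  have hB0b : |V₁ σ| ≤ C * σ^2 := by
    have b1 := abs_nonneg (Qop n V₁ σ); have b2 := abs_nonneg (σ * deriv V₁ σ); linarith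
  have hB1b : |σ * deriv V₁ σ| ≤ C * σ^2 := by
    have b1 := abs_nonneg (Qop n V₁ σ); have b2 := abs_nonneg (V₁ σ); linarith
  obtain ⟨hQl, hQu⟩ := abs_le.1 hQb
  obtain ⟨hB0l, hB0u⟩ := abs_le.1 hB0b
  obtain ⟨hB1l, hB1u⟩ := abs_le.1 hB1b
  have hCσ : (0:ℝ) ≤ C * σ^2 := mul_nonneg hC (sq_nonneg σ)
  have ha_le_u : a ≤ u := ha_le_b.trans hb_up
  have ha2 : a^2 ≤ u^2 := pow_le_pow_left₀ hapos.le ha_le_u 2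
  have hab : a * b ≤ u^2 := by
    calc a * b ≤ u * u := mul_le_mul ha_le_u hb_up hbpos.le hupos.le
    _ = u^2 := (pow_two u).symm
  have habpos : (0:ℝ) ≤ a * b := mul_nonneg hapos.le hbpos.le
  have ha2pos : (0:ℝ) ≤ a^2 := sq_nonneg a
  have hcoef : (0:ℝ) ≤ (1-ε) * (c^2*bp) := mul_nonneg (by linarith) hKpos.le
  have hεK : 0 ≤ ε * (c^2*bp) := mul_nonneg hε0.le hKpos.le
  have hcoefu : (1-ε) * (c^2*bp) ≤ u^2 := by linarith only [hK, hεK]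
  have e1 : u/2 * (η * σ^2) ≤ b * (-(σ * deriv V₀ σ)) :=
    mul_le_mul hb_low hP (by positivity) hbpos.le
  have e2 : -(u^2 * (C * σ^2)) ≤ (1-ε) * (c^2*bp) * V₁ σ := by
    linarith only [mul_le_mul_of_nonneg_left hB0l hcoef, mul_le_mul_of_nonneg_right hcoefu hCσ]
  have e3 : a * b * (σ * deriv V₁ σ) ≤ u^2 * (C * σ^2) := by
    linarith only [mul_le_mul_of_nonneg_left hB1u habpos, mul_le_mul_of_nonneg_right hab hCσ]
  have e4 : a^2 * Qop n V₁ σ ≤ u^2 * (C * σ^2) := by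
    linarith only [mul_le_mul_of_nonneg_left hQu ha2pos, mul_le_mul_of_nonneg_right ha2 hCσ]
  have e5 : ε * (u/2 * (η * σ^2))
      ≤ b * (-(σ * deriv V₀ σ)) - a * (-(σ * deriv V₀ σ)) := by
    have h := mul_le_mul_of_nonneg_left e1 hε0.le
    calc ε * (u/2 * (η * σ^2)) ≤ ε * (b * (-(σ * deriv V₀ σ))) := h
    _ = b * (-(σ * deriv V₀ σ)) - a * (-(σ * deriv V₀ σ))  := by rw [hadef]; ring
  have key2 : 3 * (u^2 * (C * σ^2)) ≤ ε * (u/2 * (η * σ^2)) := by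
    linarith only [mul_le_mul_of_nonneg_right hkey
      (show (0:ℝ) ≤ u*σ^2/2 from by positivity)]
  linarith only [e2, e3, e4, e5, key2]
end

section
/- Let n ≥ 2 be an integer and let A > 0, B > 0. For all sufficiently small ε > 0 and δ > 0 the following holds. Set ρ_* = A/√ε, γ = δ + (1−δ)ε²/(ε + 2A²/(n−1)), a = (1−δ)(n−1)/4, Λ(r) = 1/(−log r), W₀(ρ) = ((n−1)/2)(1 + 2(n−1)/ρ²), and define v_out⁻(r,t) = aΛ(r) + (1−ε)·t·F[aΛ](r) and v_par⁻(r,t) = (1/(−log t))·[ (1−γ)W₀(r/√t) − B²/((−log t)·(r/√t)⁴) ]. Then there exists t_* ∈ (0, 1/e) such that for all 0 < t < t_*: v_par⁻(ρ_*√t, t) > v_out⁻(ρ_*√t, t) and v_par⁻(3ρ_*√t, t) < v_out⁻(3ρ_*√t, t). -/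
/-!
Work in the self-similar variable `ρ = r/√t` and put `s = 1/(-log t)`, so `s → 0⁺` as `t → 0⁺`.
Since `-log(ρ√t) = (-log t)/2 - log ρ`, one has `Λ(ρ√t) = s/(1/2 - s log ρ) ≈ 2s`, and
`t F[aΛ](ρ√t)` only involves `t/r² = 1/ρ²` and powers of `Λ`. Hence `(-log t)(v_par⁻ - v_out⁻)` at
`r = ρ√t` is a function of `s` continuous at `s = 0`, with value
`(1-γ)W₀(ρ) - 2a - 4a(1-ε)(n-1)/ρ²`. For the given `γ` and `a` this equals
`(1-δ)(n-1)ε(4A² - ερ²) / (2(ε + 2A²/(n-1))ρ²)`, positive at `ρ_* = A/√ε` and negative at `3ρ_*`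
(the crossing is at `2ρ_*`), for every `ε, δ ∈ (0, 1)`.
-/

open Real Set Filter

/-- `Λ(r) = 1/(-log r)`. -/
noncomputable def Lam (r : ℝ) : ℝ := 1 / (-Real.log r)

/-- The outer-region subsolution `v_out⁻(r,t) = aΛ(r) + (1-ε) t F[aΛ](r)`. -/
noncomputable def vOuter (n : ℕ) (a b : ℝ) (r t : ℝ) : ℝ :=
  a * Lam r + b * t * Fop n (fun ρ => a * Lam ρ) r

/-- `W₀(ρ) = ((n-1)/2)(1 + 2(n-1)/ρ²)`. -/
noncomputable def W0 (n : ℕ) (ρ : ℝ) : ℝ :=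
  (((n:ℝ) - 1) / 2) * (1 + 2 * ((n:ℝ) - 1) / ρ^2)

/-- The parabolic-region subsolution
`v_par⁻(r,t) = (1/(-log t))·[(1-γ)W₀(r/√t) - B²/((-log t)(r/√t)⁴)]`. -/
noncomputable def vParSub (n : ℕ) (γ B : ℝ) (r t : ℝ) : ℝ :=
  (1 / (-Real.log t)) *
    ((1 - γ) * W0 n (r / Real.sqrt t) - B^2 / ((-Real.log t) * (r / Real.sqrt t)^4))


open Topology

lemma hasDerivAt_Lam {r : ℝ} (hr : 0 < r) (hr1 : r ≠ 1) :
    HasDerivAt Lam (Lam r ^ 2 / r) r := by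
  have hlog : -log r ≠ 0 := neg_ne_zero.mpr (log_ne_zero_of_pos_of_ne_one hr hr1)
  have hLam : Lam = fun x => (-log x)⁻¹ := funext fun x => one_div _
  rw [hLam]
  refine ((hasDerivAt_log hr.ne').fun_neg.fun_inv hlog).congr_deriv ?_
  field_simp

lemma deriv_Lam_eventuallyEq {r : ℝ} (hr : 0 < r) (hr1 : r ≠ 1) :
    deriv Lam =ᶠ[𝓝 r] fun x => Lam x ^ 2 / x := by
  filter_upwards [Ioi_mem_nhds hr, isOpen_ne.mem_nhds hr1] with x hx hx1
  exact (hasDerivAt_Lam hx hx1).deriv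

lemma hasDerivAt_deriv_Lam {r : ℝ} (hr : 0 < r) (hr1 : r ≠ 1) :
    HasDerivAt (deriv Lam) ((2 * Lam r ^ 3 - Lam r ^ 2) / r ^ 2) r := by
  refine HasDerivAt.congr_of_eventuallyEq ?_ (deriv_Lam_eventuallyEq hr hr1)
  refine (((hasDerivAt_Lam hr hr1).fun_pow 2).fun_div (hasDerivAt_id r) hr.ne').congr_deriv ?_
  simp only [id]
  field_simp
  ring

lemma Fop_const_mul_Lam (n : ℕ) (a : ℝ) {r : ℝ} (hr : 0 < r) (hr1 : r ≠ 1) :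
    Fop n (fun x => a * Lam x) r =
      (2 * a * (n - 1) * Lam r + a * (n - 1) * (1 - 2 * a) * Lam r ^ 2
        - 2 * a ^ 2 * Lam r ^ 3 + 3 / 2 * a ^ 2 * Lam r ^ 4) / r ^ 2 := by
  have hd : deriv (fun x => a * Lam x) = fun x => a * deriv Lam x :=
    funext fun x => deriv_const_mul_field a
  simp only [Fop, hd, deriv_const_mul_field]
  rw [(hasDerivAt_deriv_Lam hr hr1).deriv, (hasDerivAt_Lam hr hr1).deriv]
  field_simp
  ring

/-- `r² F[aΛ](r) / Λ(r)` as a polynomial in `Λ(r)`, with the factor `t/r²` written as `1/ρ²`. -/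
noncomputable def outerProfile (n : ℕ) (a b ρ x : ℝ) : ℝ :=
  a + b / ρ ^ 2 * (2 * a * (n - 1) + a * (n - 1) * (1 - 2 * a) * x
    - 2 * a ^ 2 * x ^ 2 + 3 / 2 * a ^ 2 * x ^ 3)

lemma vOuter_mul_sqrt (n : ℕ) (a b : ℝ) {ρ t : ℝ} (hρ : 0 < ρ) (ht : 0 < t)
    (hr1 : ρ * √t ≠ 1) :
    vOuter n a b (ρ * √t) t = Lam (ρ * √t) * outerProfile n a b ρ (Lam (ρ * √t)) := by
  have hs : 0 < √t := sqrt_pos.mpr ht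
  rw [vOuter, Fop_const_mul_Lam n a (by positivity) hr1, outerProfile]
  nth_rw 2 [← sq_sqrt ht.le]
  field_simp

lemma negLog_mul_vParSub_mul_sqrt (n : ℕ) (γ B ρ : ℝ) {t : ℝ} (ht : 0 < t) (hlog : log t ≠ 0) :
    -log t * vParSub n γ B (ρ * √t) t = (1 - γ) * W0 n ρ - B ^ 2 / ρ ^ 4 * (-log t)⁻¹ := by
  have hs : √t ≠ 0 := (sqrt_pos.mpr ht).ne'
  rw [vParSub, mul_div_cancel_right₀ _ hs]
  field_simp

lemma Lam_mul_sqrt {ρ t : ℝ} (hρ : 0 < ρ) (ht : 0 < t) (hlog : log t ≠ 0) :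
    Lam (ρ * √t) = (-log t)⁻¹ / (1 / 2 - (-log t)⁻¹ * log ρ) := by
  rw [Lam, log_mul hρ.ne' (sqrt_pos.mpr ht).ne', log_sqrt ht.le]
  field_simp
  ring

lemma tendsto_inv_negLog : Tendsto (fun t => (-log t)⁻¹) (𝓝[>] 0) (𝓝 0) :=
  (tendsto_neg_atBot_atTop.comp tendsto_log_nhdsGT_zero).inv_tendsto_atTop

theorem tendsto_negLog_mul_vParSub_sub_vOuter (n : ℕ) (γ B a b : ℝ) {ρ : ℝ} (hρ : 0 < ρ) :
    Tendsto (fun t => -log t * (vParSub n γ B (ρ * √t) t - vOuter n a b (ρ * √t) t))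
      (𝓝[>] 0) (𝓝 ((1 - γ) * W0 n ρ - 2 * outerProfile n a b ρ 0)) := by
  -- the rescaled difference as a function of `s = (-log t)⁻¹`, using `Lam_mul_sqrt`
  set G : ℝ → ℝ := fun s => (1 - γ) * W0 n ρ - B ^ 2 / ρ ^ 4 * s
    - (1 / 2 - s * log ρ)⁻¹ * outerProfile n a b ρ (s / (1 / 2 - s * log ρ))
  have hG : ContinuousAt G 0 := by
    simp only [G, outerProfile]
    fun_prop (disch := norm_num)
  have hG0 : G 0 = (1 - γ) * W0 n ρ - 2 * outerProfile n a b ρ 0 := by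
    norm_num [G]
  have hsmall : ∀ᶠ t in 𝓝[>] (0 : ℝ), ρ * √t < 1 := by
    have : Tendsto (fun t => ρ * √t) (𝓝[>] 0) (𝓝 0) := by
      simpa using ((continuous_sqrt.tendsto 0).mono_left nhdsWithin_le_nhds).const_mul ρ
    exact this.eventually_lt_const one_pos
  have hG_eq : ∀ᶠ t in 𝓝[>] (0 : ℝ),
      G (-log t)⁻¹ = -log t * (vParSub n γ B (ρ * √t) t - vOuter n a b (ρ * √t) t) := by
    filter_upwards [Ioo_mem_nhdsGT one_pos, hsmall] with t ⟨ht, ht1⟩ hr1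
    have hlog : log t ≠ 0 := (log_neg ht ht1).ne
    rw [mul_sub, negLog_mul_vParSub_mul_sqrt n γ B ρ ht hlog,
      vOuter_mul_sqrt n a b hρ ht hr1.ne, Lam_mul_sqrt hρ ht hlog]
    simp only [G]
    field_simp
  exact hG0 ▸ (hG.tendsto.comp tendsto_inv_negLog).congr' hG_eq

lemma W0_sub_two_outerProfile (n : ℕ) (A ε δ : ℝ) {ρ : ℝ} (hn : (n : ℝ) - 1 ≠ 0)
    (hκ : ε + 2 * A ^ 2 / ((n : ℝ) - 1) ≠ 0) (hρ : ρ ≠ 0) :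
    (1 - (δ + (1 - δ) * ε ^ 2 / (ε + 2 * A ^ 2 / ((n : ℝ) - 1)))) * W0 n ρ
        - 2 * outerProfile n ((1 - δ) * ((n : ℝ) - 1) / 4) (1 - ε) ρ 0
      = (1 - δ) * ((n : ℝ) - 1) * ε / (2 * (ε + 2 * A ^ 2 / ((n : ℝ) - 1)) * ρ ^ 2)
        * (4 * A ^ 2 - ε * ρ ^ 2) := by
  have hκ' : ε * ((n : ℝ) - 1) + 2 * A ^ 2 ≠ 0 := by
    rwa [← mul_div_cancel_right₀ ε hn, ← add_div, div_ne_zero_iff, and_iff_left hn] at hκ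
  rw [W0, outerProfile]
  field_simp
  ring

lemma eventually_pos_of_tendsto_negLog_mul {f : ℝ → ℝ} {c : ℝ}
    (hf : Tendsto (fun t => -log t * f t) (𝓝[>] 0) (𝓝 c)) (hc : 0 < c) :
    ∀ᶠ t in 𝓝[>] 0, 0 < f t := by
  filter_upwards [hf.eventually (eventually_gt_nhds hc), Ioo_mem_nhdsGT one_pos]
    with t hft ⟨ht, ht1⟩
  exact pos_of_mul_pos_right hft (neg_pos.mpr (log_neg ht ht1)).le

lemma eventually_neg_of_tendsto_negLog_mul {f : ℝ → ℝ} {c : ℝ}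
    (hf : Tendsto (fun t => -log t * f t) (𝓝[>] 0) (𝓝 c)) (hc : c < 0) :
    ∀ᶠ t in 𝓝[>] 0, f t < 0 := by
  filter_upwards [hf.eventually (eventually_lt_nhds hc), Ioo_mem_nhdsGT one_pos]
    with t hft ⟨ht, ht1⟩
  exact neg_of_mul_neg_right hft (neg_pos.mpr (log_neg ht ht1)).le

lemma exists_forall_of_eventually_nhdsGT {p : ℝ → Prop} (hp : ∀ᶠ t in 𝓝[>] 0, p t)
    {b : ℝ} (hb : 0 < b) : ∃ c ∈ Ioo 0 b, ∀ t, 0 < t → t < c → p t := by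
  obtain ⟨u, hu, hsub⟩ := mem_nhdsGT_iff_exists_Ioo_subset.mp hp
  refine ⟨min u b / 2, ⟨half_pos (lt_min hu hb), by linarith [min_le_right u b]⟩, fun t ht htc => ?_⟩
  exact hsub ⟨ht, by linarith [min_le_left u b]⟩

theorem stmt8_general (n : ℕ) (hn : 2 ≤ n) (A B : ℝ) (hA : 0 < A) :
    ∃ ε₀ > (0:ℝ), ∃ δ₀ > (0:ℝ), ∀ ε δ : ℝ, 0 < ε → ε < ε₀ → 0 < δ → δ < δ₀ →
      ∃ tstar ∈ Ioo (0:ℝ) (Real.exp (-1)), ∀ t : ℝ, 0 < t → t < tstar →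
        vOuter n ((1 - δ) * ((n:ℝ) - 1) / 4) (1 - ε)
            (A / Real.sqrt ε * Real.sqrt t) t <
          vParSub n (δ + (1 - δ) * ε^2 / (ε + 2 * A^2 / ((n:ℝ) - 1))) B
            (A / Real.sqrt ε * Real.sqrt t) t ∧
        vParSub n (δ + (1 - δ) * ε^2 / (ε + 2 * A^2 / ((n:ℝ) - 1))) B
            (3 * (A / Real.sqrt ε) * Real.sqrt t) t <
          vOuter n ((1 - δ) * ((n:ℝ) - 1) / 4) (1 - ε)
            (3 * (A / Real.sqrt ε) * Real.sqrt t) t := by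
  refine ⟨1, one_pos, 1, one_pos, fun ε δ hε _ hδ hδ1 => ?_⟩
  have hn1 : (0 : ℝ) < n - 1 := by
    have : (2 : ℝ) ≤ n := by exact_mod_cast hn
    linarith
  have hκ : 0 < ε + 2 * A ^ 2 / ((n : ℝ) - 1) := by positivity
  have hρ : 0 < A / √ε := by positivity
  have hερ : ε * (A / √ε) ^ 2 = A ^ 2 := by
    rw [div_pow, sq_sqrt hε.le]; field_simp
  have hinner_gap : 4 * A ^ 2 - ε * (A / √ε) ^ 2 = 3 * A ^ 2 := by linarith
  have houter_gap : 4 * A ^ 2 - ε * (3 * (A / √ε)) ^ 2 = -(5 * A ^ 2) := by linarith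
  have hcoeff : 0 < (1 - δ) * ((n : ℝ) - 1) * ε / (2 * (ε + 2 * A ^ 2 / ((n : ℝ) - 1))) := by
    have : 0 < 1 - δ := by linarith
    positivity
  have hinner := tendsto_negLog_mul_vParSub_sub_vOuter n
    (δ + (1 - δ) * ε ^ 2 / (ε + 2 * A ^ 2 / ((n : ℝ) - 1))) B
    ((1 - δ) * ((n : ℝ) - 1) / 4) (1 - ε) hρ
  have houter := tendsto_negLog_mul_vParSub_sub_vOuter n
    (δ + (1 - δ) * ε ^ 2 / (ε + 2 * A ^ 2 / ((n : ℝ) - 1))) B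
    ((1 - δ) * ((n : ℝ) - 1) / 4) (1 - ε) (mul_pos three_pos hρ)
  rw [W0_sub_two_outerProfile n A ε δ hn1.ne' hκ.ne' hρ.ne', hinner_gap] at hinner
  rw [W0_sub_two_outerProfile n A ε δ hn1.ne' hκ.ne' (mul_pos three_pos hρ).ne',
    houter_gap] at houter
  have hinner_pos := eventually_pos_of_tendsto_negLog_mul hinner (by positivity)
  have houter_neg := eventually_neg_of_tendsto_negLog_mul houter
    (mul_neg_of_pos_of_neg (by positivity) (by nlinarith))
  exact exists_forall_of_eventually_nhdsGT
    ((hinner_pos.and houter_neg).mono fun t h => ⟨sub_pos.mp h.1, sub_neg.mp h.2⟩)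
    (exp_pos (-1))

/-- Gluing the outer and parabolic subsolutions: with `ρ_* = A/√ε` and
`γ = δ + (1-δ)ε²/(ε + 2A²/(n-1))`, for small `t` one has
`v_par⁻ > v_out⁻` at `r = ρ_*√t` and `v_par⁻ < v_out⁻` at `r = 3ρ_*√t`. -/
theorem stmt8 (n : ℕ) (hn : 2 ≤ n) (A B : ℝ) (hA : 0 < A) (hB : 0 < B) :
    ∃ ε₀ > (0:ℝ), ∃ δ₀ > (0:ℝ), ∀ ε δ : ℝ, 0 < ε → ε < ε₀ → 0 < δ → δ < δ₀ →
      ∃ tstar ∈ Ioo (0:ℝ) (Real.exp (-1)), ∀ t : ℝ, 0 < t → t < tstar →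
        vOuter n ((1 - δ) * ((n:ℝ) - 1) / 4) (1 - ε)
            (A / Real.sqrt ε * Real.sqrt t) t <
          vParSub n (δ + (1 - δ) * ε^2 / (ε + 2 * A^2 / ((n:ℝ) - 1))) B
            (A / Real.sqrt ε * Real.sqrt t) t ∧
        vParSub n (δ + (1 - δ) * ε^2 / (ε + 2 * A^2 / ((n:ℝ) - 1))) B
            (3 * (A / Real.sqrt ε) * Real.sqrt t) t <
          vOuter n ((1 - δ) * ((n:ℝ) - 1) / 4) (1 - ε)
            (3 * (A / Real.sqrt ε) * Real.sqrt t) t :=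
  stmt8_general n hn A B hA
end

section
/- Let n ≥ 2 be an integer and let C₀ ≥ 0. Let ε ∈ (0,1) and γ ∈ [0,1) be such that 1 − γ − ε/(2(n−1)²) > 0, and set k = 1/((n−1)·√(1 − γ − ε/(2(n−1)²))), so that k⁻² − (1−γ)(n−1)² = −ε/2. Let B > 0 satisfy B² ≥ 100·C₀ and B ≥ √ε, and set σ_* = B/√ε (so σ_* ≥ 1). Let G : [1,∞) → ℝ be any function satisfying |σ²·G(σ) − k⁻²| ≤ C₀·σ⁻² for all σ ≥ 1. Then G(σ_*) > (1−γ)(n−1)²·σ_*⁻² − B²·σ_*⁻⁴ and G(3σ_*) < (1−γ)(n−1)²·(3σ_*)⁻² − B²·(3σ_*)⁻⁴. -/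
open Real Set Filter

/-! After multiplying by `σ⁴`, the profile is `k⁻² σ² + O(C₀)` while the subsolution limit is
`(1-γ)(n-1)² σ² - B²`, and `k⁻² = (1-γ)(n-1)² - ε/2`. So the sign of the comparison is that of
`B² - εσ²/2` up to an error `C₀ ≤ B²/100`: at `σ² = B²/ε` this is `B²/2 > 0`, at
`σ² = 9B²/ε` it is `-7B²/2 < 0`. -/

lemma one_div_sq_one_div_mul_sqrt {c q : ℝ} (hq : 0 ≤ q) :
    1 / (1 / (c * √q)) ^ 2 = c ^ 2 * q := by
  rw [one_div_pow, one_div_one_div, mul_pow, sq_sqrt hq]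

lemma sq_mul_sub_div_two_mul_sq {c ε γ : ℝ} (hc : c ≠ 0) :
    c ^ 2 * (1 - γ - ε / (2 * c ^ 2)) = (1 - γ) * c ^ 2 - ε / 2 := by
  field_simp

lemma div_sq_sub_div_pow_four {σ : ℝ} (hσ : σ ≠ 0) (A B : ℝ) :
    A / σ ^ 2 - B / σ ^ 4 = (A * σ ^ 2 - B) / σ ^ 4 := by
  field_simp

section Comparison

variable {σ g a A B C : ℝ}

lemma abs_pow_four_mul_sub_le (hσ : 0 < σ) (h : |σ ^ 2 * g - a| ≤ C / σ ^ 2) :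
    |σ ^ 4 * g - a * σ ^ 2| ≤ C := by
  have e : σ ^ 4 * g - a * σ ^ 2 = σ ^ 2 * (σ ^ 2 * g - a) := by ring
  rwa [e, abs_mul, abs_of_pos (by positivity), ← le_div_iff₀' (by positivity)]

lemma div_sq_sub_lt_of_abs_le (hσ : 0 < σ) (h : |σ ^ 2 * g - a| ≤ C / σ ^ 2)
    (hC : C < (a - A) * σ ^ 2 + B) :
    A / σ ^ 2 - B / σ ^ 4 < g := by
  have := (abs_le.1 (abs_pow_four_mul_sub_le hσ h)).1
  rw [div_sq_sub_div_pow_four hσ.ne', div_lt_iff₀' (by positivity)]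
  linarith

lemma lt_div_sq_sub_of_abs_le (hσ : 0 < σ) (h : |σ ^ 2 * g - a| ≤ C / σ ^ 2)
    (hC : C < (A - a) * σ ^ 2 - B) :
    g < A / σ ^ 2 - B / σ ^ 4 := by
  have := (abs_le.1 (abs_pow_four_mul_sub_le hσ h)).2
  rw [div_sq_sub_div_pow_four hσ.ne', lt_div_iff₀' (by positivity)]
  linarith

end Comparison

theorem stmt9_general (n : ℕ) (hn : 2 ≤ n) (C₀ : ℝ)
    (ε γ : ℝ) (hε : ε ∈ Ioo (0:ℝ) 1)
    (hpos : 0 < 1 - γ - ε / (2 * ((n:ℝ) - 1)^2))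
    (k : ℝ)
    (hk : k = 1 / (((n:ℝ) - 1) * Real.sqrt (1 - γ - ε / (2 * ((n:ℝ) - 1)^2))))
    (B : ℝ) (hB1 : 100 * C₀ ≤ B^2) (hB2 : Real.sqrt ε ≤ B)
    (G : ℝ → ℝ)
    (hG : ∀ σ : ℝ, 1 ≤ σ → |σ^2 * G σ - 1 / k^2| ≤ C₀ / σ^2) :
    (1 - γ) * ((n:ℝ) - 1)^2 / (B / Real.sqrt ε)^2 - B^2 / (B / Real.sqrt ε)^4 <
      G (B / Real.sqrt ε) ∧
    G (3 * (B / Real.sqrt ε)) <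
      (1 - γ) * ((n:ℝ) - 1)^2 / (3 * (B / Real.sqrt ε))^2 -
        B^2 / (3 * (B / Real.sqrt ε))^4 := by
  have hn1 : (n : ℝ) - 1 ≠ 0 := by
    have : (2 : ℝ) ≤ n := by exact_mod_cast hn
    linarith
  have hk2 : 1 / k ^ 2 = (1 - γ) * ((n : ℝ) - 1) ^ 2 - ε / 2 := by
    rw [hk, one_div_sq_one_div_mul_sqrt hpos.le, sq_mul_sub_div_two_mul_sq hn1]
  have hsqrt : 0 < √ε := sqrt_pos.2 hε.1
  have hB : 0 < B := hsqrt.trans_le hB2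
  have hσ : 1 ≤ B / √ε := (one_le_div hsqrt).2 hB2
  have hσε : (B / √ε) ^ 2 * ε = B ^ 2 := by
    rw [div_pow, sq_sqrt hε.1.le, div_mul_cancel₀ _ hε.1.ne']
  rw [hk2] at hG
  constructor
  · refine div_sq_sub_lt_of_abs_le (by linarith) (hG _ hσ) ?_
    nlinarith
  · refine lt_div_sq_sub_of_abs_le (by linarith) (hG _ (by linarith)) ?_
    nlinarith

/-- Gluing comparison at the matching radii `σ_* = B/√ε` and `3σ_*`: if
`k = 1/((n-1)√(1-γ-ε/(2(n-1)²)))` and `G` satisfies `|σ²G(σ) - k⁻²| ≤ C₀σ⁻²` for `σ ≥ 1`,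
then `G(σ_*) > (1-γ)(n-1)²σ_*⁻² - B²σ_*⁻⁴` and `G(3σ_*) < (1-γ)(n-1)²(3σ_*)⁻² - B²(3σ_*)⁻⁴`. -/
theorem stmt9 (n : ℕ) (hn : 2 ≤ n) (C₀ : ℝ) (hC₀ : 0 ≤ C₀)
    (ε γ : ℝ) (hε : ε ∈ Ioo (0:ℝ) 1) (hγ : γ ∈ Ico (0:ℝ) 1)
    (hpos : 0 < 1 - γ - ε / (2 * ((n:ℝ) - 1)^2))
    (k : ℝ)
    (hk : k = 1 / (((n:ℝ) - 1) * Real.sqrt (1 - γ - ε / (2 * ((n:ℝ) - 1)^2))))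
    (B : ℝ) (hB1 : 100 * C₀ ≤ B^2) (hB2 : Real.sqrt ε ≤ B)
    (G : ℝ → ℝ)
    (hG : ∀ σ : ℝ, 1 ≤ σ → |σ^2 * G σ - 1 / k^2| ≤ C₀ / σ^2) :
    (1 - γ) * ((n:ℝ) - 1)^2 / (B / Real.sqrt ε)^2 - B^2 / (B / Real.sqrt ε)^4 <
      G (B / Real.sqrt ε) ∧
    G (3 * (B / Real.sqrt ε)) <
      (1 - γ) * ((n:ℝ) - 1)^2 / (3 * (B / Real.sqrt ε))^2 -
        B^2 / (3 * (B / Real.sqrt ε))^4 :=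
  stmt9_general n hn C₀ ε γ hε hpos k hk B hB1 hB2 G hG
end

section
/- Let n ≥ 2 be an integer and let σ₀ > 0. Let V : (−σ₀, σ₀) → ℝ be a smooth even function with V(0) = 1 satisfying F[V] = 0 on (0, σ₀). Define b₂ = V''(0)/2, b₄ = V⁗(0)/24, and b₆ = V⁽⁶⁾(0)/720. Then b₄ = (n/(n+3))·b₂² and b₆ = ((n−1)/(n+5))·b₂·b₄ = (n(n−1)/((n+3)(n+5)))·b₂³. -/
open Real Set Filter

open Asymptotics Topology in
private lemma aux_lim14 {c d C : ℝ} (h : ∀ᶠ x in 𝓝[>](0:ℝ), |c + d*x^2| ≤ C*x) : c = 0 := by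
  have hc : Continuous (fun x : ℝ => c + d * x ^ 2) := by continuity
  have h1 : Tendsto (fun x : ℝ => c + d * x ^ 2) (𝓝[>] (0:ℝ)) (𝓝 c) := by
    have := hc.tendsto 0
    simpa using this.mono_left nhdsWithin_le_nhds
  have h2 : Tendsto (fun x : ℝ => c + d * x ^ 2) (𝓝[>] (0:ℝ)) (𝓝 0) := by
    apply squeeze_zero_norm' (by simpa [Real.norm_eq_abs] using h)
    have : Tendsto (fun x : ℝ => C * x) (𝓝 (0:ℝ)) (𝓝 (C * 0)) :=
      (continuous_const.mul continuous_id).tendsto 0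
    simpa using this.mono_left nhdsWithin_le_nhds
  exact tendsto_nhds_unique h1 h2

open Asymptotics Topology in
private lemma aux_extract14 {c d : ℝ}
    (h : (fun x : ℝ => c*x^4 + d*x^6) =O[𝓝[>] (0:ℝ)] fun x => x^7) :
    c = 0 ∧ d = 0 := by
  obtain ⟨C, hC⟩ := isBigO_iff.mp h
  have hmem : Ioo (0:ℝ) 1 ∈ 𝓝[>] (0:ℝ) := Ioo_mem_nhdsGT_of_mem ⟨le_rfl, one_pos⟩
  have hc0 : c = 0 := by
    apply aux_lim14 (d := d) (C := C)
    filter_upwards [hC, hmem] with x hb hx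
    obtain ⟨hx0, hx1⟩ := hx
    have hx7 : |x^7| = x^7 := abs_of_nonneg (by positivity)
    have hx4 : (0:ℝ) < x^4 := by positivity
    rw [Real.norm_eq_abs, Real.norm_eq_abs, hx7] at hb
    have hb4 : |c + d*x^2| * x^4 ≤ (C * x^3) * x^4 := by
      calc |c + d*x^2| * x^4 = |(c + d*x^2) * x^4| := by
            rw [abs_mul, abs_of_nonneg hx4.le]
        _ = |c*x^4 + d*x^6| := by ring_nf
        _ ≤ C * x^7 := hb
        _ = (C * x^3) * x^4 := by ring
    have h3 : |c + d*x^2| ≤ C * x^3 := le_of_mul_le_mul_right hb4 hx4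
    have hC0 : 0 ≤ C * x^3 := le_trans (abs_nonneg _) h3
    have hCnn : 0 ≤ C := by nlinarith [pow_pos hx0 3]
    have hx2le : x^2 ≤ 1 := by nlinarith
    calc |c + d*x^2| ≤ C * x^3 := h3
      _ ≤ C * x := by nlinarith [mul_nonneg (mul_nonneg hCnn hx0.le) (sub_nonneg.2 hx2le)]
  refine ⟨hc0, ?_⟩
  subst hc0
  apply aux_lim14 (d := 0) (C := C)
  filter_upwards [hC, hmem] with x hb hx
  obtain ⟨hx0, hx1⟩ := hx
  have hx7 : |x^7| = x^7 := abs_of_nonneg (by positivity)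
  have hx6 : (0:ℝ) < x^6 := by positivity
  rw [Real.norm_eq_abs, Real.norm_eq_abs, hx7] at hb
  have hb6 : |d + 0*x^2| * x^6 ≤ (C * x) * x^6 := by
    calc |d + 0*x^2| * x^6 = |(d + 0*x^2) * x^6| := by
          rw [abs_mul, abs_of_nonneg hx6.le]
      _ = |0*x^4 + d*x^6| := by ring_nf
      _ ≤ C * x^7 := hb
      _ = (C * x) * x^6 := by ring
  exact le_of_mul_le_mul_right hb6 hx6

open Asymptotics Topology in
/-- Taylor coefficients at the origin of the Bryant soliton profile: if `V` is smooth and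
even on `(-σ₀, σ₀)` with `V(0) = 1` and `F[V] = 0` on `(0, σ₀)`, then with
`b₂ = V''(0)/2`, `b₄ = V⁗(0)/24`, `b₆ = V⁽⁶⁾(0)/720` one has `b₄ = (n/(n+3))b₂²` and
`b₆ = ((n-1)/(n+5))b₂b₄ = (n(n-1)/((n+3)(n+5)))b₂³`. -/
theorem stmt14 (n : ℕ) (hn : 2 ≤ n) (σ₀ : ℝ) (hσ₀ : 0 < σ₀)
    (V : ℝ → ℝ)
    (hV : ContDiffOn ℝ (⊤ : ℕ∞) V (Ioo (-σ₀) σ₀))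
    (heven : ∀ σ ∈ Ioo (-σ₀) σ₀, V (-σ) = V σ)
    (hV0 : V 0 = 1)
    (hF : ∀ σ ∈ Ioo (0:ℝ) σ₀, Fop n V σ = 0) :
    iteratedDeriv 4 V 0 / 24 = ((n:ℝ) / ((n:ℝ) + 3)) * (iteratedDeriv 2 V 0 / 2)^2 ∧
    iteratedDeriv 6 V 0 / 720 =
      (((n:ℝ) - 1) / ((n:ℝ) + 5)) * (iteratedDeriv 2 V 0 / 2) * (iteratedDeriv 4 V 0 / 24) ∧
    iteratedDeriv 6 V 0 / 720 =
      ((n:ℝ) * ((n:ℝ) - 1) / (((n:ℝ) + 3) * ((n:ℝ) + 5))) * (iteratedDeriv 2 V 0 / 2)^3 := by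
  set l : Filter ℝ := 𝓝[>] (0:ℝ) with hl
  set r : ℝ := σ₀ / 2 with hrdef
  have hr : 0 < r := by positivity
  have hrσ : r < σ₀ := by simp [hrdef]; linarith
  have h0I : (0:ℝ) ∈ Ioo (-σ₀) σ₀ := ⟨by linarith, hσ₀⟩
  have h0nhds : Ioo (-σ₀) σ₀ ∈ 𝓝 (0:ℝ) := isOpen_Ioo.mem_nhds h0I
  have hsub : Icc (0:ℝ) r ⊆ Ioo (-σ₀) σ₀ :=
    fun x hx => ⟨by linarith [hx.1], by linarith [hx.2]⟩
  have hmemr : Ioo (0:ℝ) r ∈ l := Ioo_mem_nhdsGT_of_mem ⟨le_rfl, hr⟩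
  -- derivatives are smooth
  have hV1 : ContDiffOn ℝ (⊤ : ℕ∞) (deriv V) (Ioo (-σ₀) σ₀) := hV.deriv_of_isOpen isOpen_Ioo (by simp)
  have hV2 : ContDiffOn ℝ (⊤ : ℕ∞) (deriv (deriv V)) (Ioo (-σ₀) σ₀) :=
    hV1.deriv_of_isOpen isOpen_Ioo (by simp)
  -- odd derivatives vanish at 0
  have hodd : ∀ k : ℕ, Odd k → iteratedDeriv k V 0 = 0 := by
    intro k hk
    have hfg : (fun x => V (-x)) =ᶠ[𝓝 (0:ℝ)] V := by
      filter_upwards [h0nhds] with x hx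
      exact heven x hx
    have h1 : iteratedDeriv k V 0 = iteratedDeriv k (fun x => V (-x)) 0 :=
      (Filter.EventuallyEq.iteratedDeriv_eq k hfg).symm
    rw [iteratedDeriv_comp_neg] at h1
    obtain ⟨m, rfl⟩ := hk
    simp [pow_succ, pow_mul, neg_zero] at h1
    linarith
  -- within-derivatives at 0 agree with global ones
  have key : ∀ (f : ℝ → ℝ), ContDiffOn ℝ (⊤ : ℕ∞) f (Ioo (-σ₀) σ₀) → ∀ k : ℕ,
      iteratedDerivWithin k f (Icc 0 r) 0 = iteratedDeriv k f 0 := by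
    intro f hf k
    have hf' : ContDiffOn ℝ k f (Ioo (-σ₀) σ₀) := hf.of_le (by exact_mod_cast le_top)
    have ht := (hf'.ftaylorSeriesWithin isOpen_Ioo.uniqueDiffOn).mono hsub
    have h3 := ht.eq_iteratedFDerivWithin_of_uniqueDiffOn (le_refl _) (uniqueDiffOn_Icc hr)
      (left_mem_Icc.2 hr.le)
    rw [iteratedDerivWithin_eq_iteratedFDerivWithin, ← h3, iteratedDeriv_eq_iteratedFDeriv]
    show (iteratedFDerivWithin ℝ k f (Ioo (-σ₀) σ₀) 0) (fun _ => 1) = _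
    rw [iteratedFDerivWithin_of_isOpen k isOpen_Ioo h0I]
  set a2 : ℝ := iteratedDeriv 2 V 0 with ha2
  set a4 : ℝ := iteratedDeriv 4 V 0 with ha4
  set a6 : ℝ := iteratedDeriv 6 V 0 with ha6
  -- Taylor polynomial evaluations
  have hT0 : ∀ x : ℝ, taylorWithinEval V 6 (Icc 0 r) 0 x
      = 1 + a2/2*x^2 + a4/24*x^4 + a6/720*x^6 := by
    intro x
    rw [taylor_within_apply]
    have e0 : iteratedDerivWithin 0 V (Icc 0 r) 0 = 1 := by
      rw [key V hV 0]; simpa [iteratedDeriv_zero] using hV0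
    have e1 : iteratedDerivWithin 1 V (Icc 0 r) 0 = 0 := by
      rw [key V hV 1]; exact hodd 1 ⟨0, rfl⟩
    have e2 : iteratedDerivWithin 2 V (Icc 0 r) 0 = a2 := key V hV 2
    have e3 : iteratedDerivWithin 3 V (Icc 0 r) 0 = 0 := by
      rw [key V hV 3]; exact hodd 3 ⟨1, rfl⟩
    have e4 : iteratedDerivWithin 4 V (Icc 0 r) 0 = a4 := key V hV 4
    have e5 : iteratedDerivWithin 5 V (Icc 0 r) 0 = 0 := by
      rw [key V hV 5]; exact hodd 5 ⟨2, rfl⟩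
    have e6 : iteratedDerivWithin 6 V (Icc 0 r) 0 = a6 := key V hV 6
    simp [Finset.sum_range_succ, e0, e1, e2, e3, e4, e5, e6, Nat.factorial]
    ring
  have hT1 : ∀ x : ℝ, taylorWithinEval (deriv V) 5 (Icc 0 r) 0 x
      = a2*x + a4/6*x^3 + a6/120*x^5 := by
    intro x
    rw [taylor_within_apply]
    have d0 : ∀ k : ℕ, iteratedDeriv k (deriv V) 0 = iteratedDeriv (k+1) V 0 := by
      intro k
      rw [iteratedDeriv_succ']
    have e0 : iteratedDerivWithin 0 (deriv V) (Icc 0 r) 0 = 0 := by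
      rw [key _ hV1 0, d0 0]; exact hodd 1 ⟨0, rfl⟩
    have e1 : iteratedDerivWithin 1 (deriv V) (Icc 0 r) 0 = a2 := by
      rw [key _ hV1 1, d0 1]
    have e2 : iteratedDerivWithin 2 (deriv V) (Icc 0 r) 0 = 0 := by
      rw [key _ hV1 2, d0 2]; exact hodd 3 ⟨1, rfl⟩
    have e3 : iteratedDerivWithin 3 (deriv V) (Icc 0 r) 0 = a4 := by
      rw [key _ hV1 3, d0 3]
    have e4 : iteratedDerivWithin 4 (deriv V) (Icc 0 r) 0 = 0 := by
      rw [key _ hV1 4, d0 4]; exact hodd 5 ⟨2, rfl⟩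
    have e5 : iteratedDerivWithin 5 (deriv V) (Icc 0 r) 0 = a6 := by
      rw [key _ hV1 5, d0 5]
    simp [Finset.sum_range_succ, e0, e1, e2, e3, e4, e5, Nat.factorial]
    ring
  have hT2 : ∀ x : ℝ, taylorWithinEval (deriv (deriv V)) 4 (Icc 0 r) 0 x
      = a2 + a4/2*x^2 + a6/24*x^4 := by
    intro x
    rw [taylor_within_apply]
    have d0 : ∀ k : ℕ, iteratedDeriv k (deriv (deriv V)) 0 = iteratedDeriv (k+2) V 0 := by
      intro k
      rw [show k + 2 = k + 1 + 1 from rfl, iteratedDeriv_succ', iteratedDeriv_succ']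
    have e0 : iteratedDerivWithin 0 (deriv (deriv V)) (Icc 0 r) 0 = a2 := by
      rw [key _ hV2 0, d0 0]
    have e1 : iteratedDerivWithin 1 (deriv (deriv V)) (Icc 0 r) 0 = 0 := by
      rw [key _ hV2 1, d0 1]; exact hodd 3 ⟨1, rfl⟩
    have e2 : iteratedDerivWithin 2 (deriv (deriv V)) (Icc 0 r) 0 = a4 := by
      rw [key _ hV2 2, d0 2]
    have e3 : iteratedDerivWithin 3 (deriv (deriv V)) (Icc 0 r) 0 = 0 := by
      rw [key _ hV2 3, d0 3]; exact hodd 5 ⟨2, rfl⟩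
    have e4 : iteratedDerivWithin 4 (deriv (deriv V)) (Icc 0 r) 0 = a6 := by
      rw [key _ hV2 4, d0 4]
    simp [Finset.sum_range_succ, e0, e1, e2, e3, e4, Nat.factorial]
    ring
  -- Taylor remainder bounds, as IsBigO statements
  have he0 : (fun x => V x - (1 + a2/2*x^2 + a4/24*x^4 + a6/720*x^6)) =O[l]
      fun x => x^7 := by
    obtain ⟨C, hC⟩ := exists_taylor_mean_remainder_bound (n := 6) hr.le
      ((hV.mono hsub).of_le (by exact WithTop.coe_le_coe.2 (le_top : (((6 + 1 : ℕ)) : ℕ∞) ≤ ⊤)))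
    rw [isBigO_iff]
    refine ⟨C, ?_⟩
    filter_upwards [hmemr] with x hx
    have := hC x ⟨hx.1.le, hx.2.le⟩
    rw [hT0 x] at this
    calc ‖V x - (1 + a2/2*x^2 + a4/24*x^4 + a6/720*x^6)‖ ≤ C * (x - 0)^7 := this
      _ ≤ C * ‖x^7‖ := by
          rw [sub_zero, Real.norm_eq_abs, abs_of_nonneg (pow_nonneg hx.1.le 7)]
  have he1 : (fun x => deriv V x - (a2*x + a4/6*x^3 + a6/120*x^5)) =O[l]
      fun x => x^6 := by
    obtain ⟨C, hC⟩ := exists_taylor_mean_remainder_bound (n := 5) hr.le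
      ((hV1.mono hsub).of_le (by exact WithTop.coe_le_coe.2 (le_top : (((5 + 1 : ℕ)) : ℕ∞) ≤ ⊤)))
    rw [isBigO_iff]
    refine ⟨C, ?_⟩
    filter_upwards [hmemr] with x hx
    have := hC x ⟨hx.1.le, hx.2.le⟩
    rw [hT1 x] at this
    calc ‖deriv V x - (a2*x + a4/6*x^3 + a6/120*x^5)‖ ≤ C * (x - 0)^6 := this
      _ ≤ C * ‖x^6‖ := by
          rw [sub_zero, Real.norm_eq_abs, abs_of_nonneg (pow_nonneg hx.1.le 6)]
  have he2 : (fun x => deriv (deriv V) x - (a2 + a4/2*x^2 + a6/24*x^4)) =O[l]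
      fun x => x^5 := by
    obtain ⟨C, hC⟩ := exists_taylor_mean_remainder_bound (n := 4) hr.le
      ((hV2.mono hsub).of_le (by exact WithTop.coe_le_coe.2 (le_top : (((4 + 1 : ℕ)) : ℕ∞) ≤ ⊤)))
    rw [isBigO_iff]
    refine ⟨C, ?_⟩
    filter_upwards [hmemr] with x hx
    have := hC x ⟨hx.1.le, hx.2.le⟩
    rw [hT2 x] at this
    calc ‖deriv (deriv V) x - (a2 + a4/2*x^2 + a6/24*x^4)‖ ≤ C * (x - 0)^5 := this
      _ ≤ C * ‖x^5‖ := by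
          rw [sub_zero, Real.norm_eq_abs, abs_of_nonneg (pow_nonneg hx.1.le 5)]
  -- boundedness facts
  have hone : ∀ (f : ℝ → ℝ), ContinuousAt f 0 → f =O[l] (fun _ => (1:ℝ)) := by
    intro f hf
    exact (hf.tendsto.mono_left nhdsWithin_le_nhds).isBigO_one ℝ
  have hVO : V =O[l] (fun _ => (1:ℝ)) := hone V (hV.continuousOn.continuousAt h0nhds)
  have hV1O : deriv V =O[l] (fun _ => (1:ℝ)) := hone _ (hV1.continuousOn.continuousAt h0nhds)
  have hp0O : (fun x : ℝ => 1 + a2/2*x^2 + a4/24*x^4 + a6/720*x^6) =O[l] (fun _ => (1:ℝ)) :=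
    hone _ (by fun_prop)
  have hp1O : (fun x : ℝ => a2*x + a4/6*x^3 + a6/120*x^5) =O[l] (fun _ => (1:ℝ)) :=
    hone _ (by fun_prop)
  have hp2O : (fun x : ℝ => a2 + a4/2*x^2 + a6/24*x^4) =O[l] (fun _ => (1:ℝ)) :=
    hone _ (by fun_prop)
  have hconstO : ∀ c : ℝ, (fun _ : ℝ => c) =O[l] (fun _ => (1:ℝ)) := by
    intro c
    exact hone _ continuousAt_const
  -- power manipulation helpers
  have hpow : ∀ j k : ℕ, k ≤ j → (fun x:ℝ => x^j) =O[l] fun x => x^k := by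
    intro j k hjk
    rw [isBigO_iff]
    refine ⟨1, ?_⟩
    filter_upwards [Ioo_mem_nhdsGT_of_mem (⟨le_rfl, one_pos⟩ : (0:ℝ) ∈ Ico (0:ℝ) 1)] with x hx
    rw [Real.norm_eq_abs, Real.norm_eq_abs, one_mul,
      abs_of_nonneg (pow_nonneg hx.1.le j), abs_of_nonneg (pow_nonneg hx.1.le k)]
    exact pow_le_pow_of_le_one hx.1.le hx.2.le hjk
  have hcomb : ∀ (f g : ℝ → ℝ) (j k : ℕ), f =O[l] (fun x => x^j) → g =O[l] (fun x => x^k) →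
      (fun x => f x * g x) =O[l] fun x => x^(j+k) := by
    intro f g j k hf hg
    have := hf.mul hg
    simpa [← pow_add] using this
  have hcomb1 : ∀ (f g : ℝ → ℝ) (j : ℕ), f =O[l] (fun x => x^j) → g =O[l] (fun _ => (1:ℝ)) →
      (fun x => f x * g x) =O[l] fun x => x^j := by
    intro f g j hf hg
    have := hf.mul hg
    simpa using this
  have hcomb1' : ∀ (f g : ℝ → ℝ) (j : ℕ), f =O[l] (fun _ => (1:ℝ)) → g =O[l] (fun x => x^j) →
      (fun x => f x * g x) =O[l] fun x => x^j := by
    intro f g j hf hg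
    have := hf.mul hg
    simpa using this
  have hxj : ∀ j : ℕ, (fun x : ℝ => x^j) =O[l] fun x => x^j := fun j => isBigO_refl _ _
  -- the error function is O(x^7)
  have hE : (fun x => (x^2*((V x - (1 + a2/2*x^2 + a4/24*x^4 + a6/720*x^6))
        * (a2 + a4/2*x^2 + a6/24*x^4))
      + x^2*(V x * (deriv (deriv V) x - (a2 + a4/2*x^2 + a6/24*x^4))))
      - (1/2) * (x^2*((deriv V x - (a2*x + a4/6*x^3 + a6/120*x^5))
        * (deriv V x + (a2*x + a4/6*x^3 + a6/120*x^5))))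
      + (x^1*((((n:ℝ)-1) - V x)*(deriv V x - (a2*x + a4/6*x^3 + a6/120*x^5)))
        - x^1*((V x - (1 + a2/2*x^2 + a4/24*x^4 + a6/720*x^6)) * (a2*x + a4/6*x^3 + a6/120*x^5)))
      + (2*((n:ℝ)-1)) * ((V x - (1 + a2/2*x^2 + a4/24*x^4 + a6/720*x^6))
        * (1 - V x - (1 + a2/2*x^2 + a4/24*x^4 + a6/720*x^6)))) =O[l] fun x => x^7 := by
    have t1 := hcomb _ _ 2 7 (hxj 2) (hcomb1 _ _ 7 he0 hp2O)
    have t2 := hcomb _ _ 2 5 (hxj 2) (hcomb1' _ _ 5 hVO he2)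
    have t3 := (hcomb _ _ 2 6 (hxj 2) (hcomb1 _ _ 6 he1 (hV1O.add hp1O))).const_mul_left (1/2)
    have t4 := hcomb _ _ 1 6 (hxj 1) (hcomb1' _ _ 6 ((hconstO ((n:ℝ)-1)).sub hVO) he1)
    have t5 := hcomb _ _ 1 7 (hxj 1) (hcomb1 _ _ 7 he0 hp1O)
    have t6 := (hcomb1 _ _ 7 he0
      (((hconstO 1).sub hVO).sub hp0O)).const_mul_left (2*((n:ℝ)-1))
    exact ((((t1.trans (hpow 9 7 (by norm_num))).add t2).sub
        (t3.trans (hpow 8 7 (by norm_num)))).add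
        (t4.sub (t5.trans (hpow 8 7 (by norm_num))))).add t6
  -- the ODE gives Q =O x^7
  have hG : ∀ x ∈ Ioo (0:ℝ) r,
      x^2 * (V x * deriv (deriv V) x) - x^2/2 * (deriv V x)^2
        + x*(((n:ℝ) - 1) - V x) * deriv V x + 2*((n:ℝ)-1) * V x * (1 - V x) = 0 := by
    intro x hx
    have hx0 : x ≠ 0 := ne_of_gt hx.1
    have h := hF x ⟨hx.1, hx.2.trans hrσ⟩
    unfold Fop at h
    field_simp at h
    have h2 : 2*x*(x^2 * (V x * deriv (deriv V) x) - x^2/2 * (deriv V x)^2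
        + x*(((n:ℝ) - 1) - V x) * deriv V x + 2*((n:ℝ)-1) * V x * (1 - V x)) = 0 := by
      linear_combination x * h
    rcases mul_eq_zero.mp h2 with h3 | h3
    · exact absurd h3 (by positivity)
    · exact h3
  have hQO : (fun x => x^2 * ((1 + a2/2*x^2 + a4/24*x^4 + a6/720*x^6)
        * (a2 + a4/2*x^2 + a6/24*x^4))
      - x^2/2 * (a2*x + a4/6*x^3 + a6/120*x^5)^2
      + x*(((n:ℝ) - 1) - (1 + a2/2*x^2 + a4/24*x^4 + a6/720*x^6))
        * (a2*x + a4/6*x^3 + a6/120*x^5)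
      + 2*((n:ℝ)-1) * (1 + a2/2*x^2 + a4/24*x^4 + a6/720*x^6)
        * (1 - (1 + a2/2*x^2 + a4/24*x^4 + a6/720*x^6))) =O[l] fun x => x^7 := by
    refine (hE.neg_left.congr' ?_ (EventuallyEq.refl _ _))
    filter_upwards [hmemr] with x hx
    have h0 := hG x hx
    linear_combination -h0
  -- peel off the tail and extract coefficients
  set c4 : ℝ := (2*(n:ℝ)+6)*(a4/24) - 2*(n:ℝ)*(a2/2)^2 with hc4
  set c6 : ℝ := (4*(n:ℝ)+20)*(a6/720) - (4*(n:ℝ)-4)*(a2/2)*(a4/24) with hc6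
  have hSO : (fun x : ℝ => (16-4*(n:ℝ))*(a2/2)*(a6/720) - (2*(n:ℝ)-2)*(a4/24)^2
      + (12-4*(n:ℝ))*(a4/24)*(a6/720)*x^2 + (8-2*(n:ℝ))*(a6/720)^2*x^4) =O[l]
      (fun _ => (1:ℝ)) := hone _ (by fun_prop)
  have htail : (fun x : ℝ => x^8*((16-4*(n:ℝ))*(a2/2)*(a6/720) - (2*(n:ℝ)-2)*(a4/24)^2
      + (12-4*(n:ℝ))*(a4/24)*(a6/720)*x^2 + (8-2*(n:ℝ))*(a6/720)^2*x^4)) =O[l]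
      fun x => x^7 :=
    (hcomb1 _ _ 8 (hxj 8) hSO).trans (hpow 8 7 (by norm_num))
  have hmain : (fun x : ℝ => c4*x^4 + c6*x^6) =O[l] fun x => x^7 := by
    refine (hQO.sub htail).congr_left ?_
    intro x
    rw [hc4, hc6]
    ring
  obtain ⟨h4, h6⟩ := aux_extract14 hmain
  rw [hc4] at h4
  rw [hc6] at h6
  have hn3 : (n:ℝ) + 3 ≠ 0 := by positivity
  have hn5 : (n:ℝ) + 5 ≠ 0 := by positivity
  refine ⟨?_, ?_, ?_⟩
  · field_simp
    linear_combination 48 * h4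
  · field_simp
    linear_combination 8640 * h6
  · have e4 : a4 / 24 = (n:ℝ)/((n:ℝ)+3) * (a2/2)^2 := by
      field_simp
      linear_combination 48 * h4
    have e6 : a6 / 720 = ((n:ℝ)-1)/((n:ℝ)+5) * (a2/2) * (a4/24) := by
      field_simp
      linear_combination 8640 * h6
    rw [e6, e4]
    field_simp
end

section
/- Let n ≥ 2 be an integer, let σ₁ > 0, and let V : (σ₁, ∞) → ℝ be a smooth solution of F[V] = 0. Suppose there are real numbers c₂, c₄, c₆ such that, as σ → ∞: V(σ) = c₂σ⁻² + c₄σ⁻⁴ + c₆σ⁻⁶ + o(σ⁻⁶), V'(σ) = −2c₂σ⁻³ − 4c₄σ⁻⁵ − 6c₆σ⁻⁷ + o(σ⁻⁷), and V''(σ) = 6c₂σ⁻⁴ + 20c₄σ⁻⁶ + 42c₆σ⁻⁸ + o(σ⁻⁸). Then c₄ = ((4−n)/(n−1))·c₂² and c₆ = ((n−4)(n−7)/(n−1)²)·c₂³. -/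
open Real Set Filter Asymptotics

/-- Auxiliary polynomial arising from the expansion of `σ⁸ F[V](σ) - σ² A₆`. -/
noncomputable def Gbig (m c2 c4 c6 : ℝ) (x a b c : ℝ) : ℝ :=
  24*c2*c4 - 4*m*c6 - 4*m*c2*c4 + b*m + 2*a*m
  + x^2*(16*c4^2 + 44*c2*c6 - 2*m*c4^2 - 4*m*c2*c6 + c*c2 + b*c2 + 8*a*c2 - 4*a*m*c2)
  + x^4*(48*c4*c6 - 4*m*c4*c6 + c*c4 + 3*b*c4 + 24*a*c4 - 4*a*m*c4)
  + x^6*(30*c6^2 - 2*m*c6^2 + c*c6 + 5*b*c6 - (1/2)*b^2 + 48*a*c6 - 4*a*m*c6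
          + a*c - a*b - 2*a^2*m)

set_option maxHeartbeats 2000000 in
lemma key_ident (m c2 c4 c6 σ v v1 v2 : ℝ) (hσ : σ ≠ 0) :
    σ^8 * (v * v2 - (1/2) * v1^2 + ((m - v) / σ) * v1 + (2*m / σ^2) * v * (1 - v))
      - σ^2 * (6*c2^2 - 2*m*c4 - 2*m*c2^2)
    = Gbig m c2 c4 c6 (1/σ)
        ((v - (c2/σ^2 + c4/σ^4 + c6/σ^6)) * σ^6)
        ((v1 - (-(2*c2)/σ^3 - 4*c4/σ^5 - 6*c6/σ^7)) * σ^7)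
        ((v2 - (6*c2/σ^4 + 20*c4/σ^6 + 42*c6/σ^8)) * σ^8) := by
  unfold Gbig
  field_simp
  ring

set_option maxHeartbeats 2000000 in
/-- Asymptotics at infinity of the Bryant soliton profile: if `V` is a smooth solution of
`F[V] = 0` on `(σ₁, ∞)` with the differentiated expansions
`V = c₂σ⁻² + c₄σ⁻⁴ + c₆σ⁻⁶ + o(σ⁻⁶)` etc., then `c₄ = ((4-n)/(n-1))c₂²` and
`c₆ = ((n-4)(n-7)/(n-1)²)c₂³`. -/
theorem stmt15 (n : ℕ) (hn : 2 ≤ n) (σ₁ : ℝ)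
    (V : ℝ → ℝ) (hV : ContDiffOn ℝ (⊤ : ℕ∞) V (Ioi σ₁))
    (hF : ∀ σ ∈ Ioi σ₁, Fop n V σ = 0)
    (c₂ c₄ c₆ : ℝ)
    (h0 : (fun σ => V σ - (c₂ / σ^2 + c₄ / σ^4 + c₆ / σ^6)) =o[atTop]
      fun σ : ℝ => 1 / σ^6)
    (h1 : (fun σ => deriv V σ - (-(2 * c₂) / σ^3 - 4 * c₄ / σ^5 - 6 * c₆ / σ^7)) =o[atTop]
      fun σ : ℝ => 1 / σ^7)
    (h2 : (fun σ => deriv (deriv V) σ -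
        (6 * c₂ / σ^4 + 20 * c₄ / σ^6 + 42 * c₆ / σ^8)) =o[atTop]
      fun σ : ℝ => 1 / σ^8) :
    c₄ = ((4 - (n:ℝ)) / ((n:ℝ) - 1)) * c₂^2 ∧
    c₆ = (((n:ℝ) - 4) * ((n:ℝ) - 7) / ((n:ℝ) - 1)^2) * c₂^3 := by
  set m : ℝ := (n : ℝ) - 1 with hm_def
  have hn' : (n : ℝ) = m + 1 := by rw [hm_def]; ring
  have hm : (1 : ℝ) ≤ m := by
    have h2n : (2 : ℝ) ≤ (n : ℝ) := by exact_mod_cast hn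
    rw [hm_def]; linarith
  have hm0 : m ≠ 0 := by linarith
  set A₆ : ℝ := 6*c₂^2 - 2*m*c₄ - 2*m*c₂^2 with hA6_def
  set a : ℝ → ℝ := fun σ => (V σ - (c₂/σ^2 + c₄/σ^4 + c₆/σ^6)) * σ^6 with ha_def
  set b : ℝ → ℝ := fun σ =>
    (deriv V σ - (-(2*c₂)/σ^3 - 4*c₄/σ^5 - 6*c₆/σ^7)) * σ^7 with hb_def
  set c : ℝ → ℝ := fun σ =>
    (deriv (deriv V) σ - (6*c₂/σ^4 + 20*c₄/σ^6 + 42*c₆/σ^8)) * σ^8 with hc_def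
  have hev : ∀ᶠ σ : ℝ in atTop, 0 < σ := eventually_gt_atTop 0
  have ha : Tendsto a atTop (nhds 0) := by
    refine (h0.tendsto_div_nhds_zero).congr' ?_
    filter_upwards [hev] with σ hσ
    simp only [ha_def]
    rw [one_div, div_eq_mul_inv, inv_inv]
  have hb : Tendsto b atTop (nhds 0) := by
    refine (h1.tendsto_div_nhds_zero).congr' ?_
    filter_upwards [hev] with σ hσ
    simp only [hb_def]
    rw [one_div, div_eq_mul_inv, inv_inv]
  have hc : Tendsto c atTop (nhds 0) := by
    refine (h2.tendsto_div_nhds_zero).congr' ?_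
    filter_upwards [hev] with σ hσ
    simp only [hc_def]
    rw [one_div, div_eq_mul_inv, inv_inv]
  have hx : Tendsto (fun σ : ℝ => 1/σ) atTop (nhds 0) := by
    simpa [one_div] using (tendsto_inv_atTop_zero : Tendsto (fun σ : ℝ => σ⁻¹) atTop (nhds 0))
  have hcont : Continuous (fun p : ℝ × ℝ × ℝ × ℝ =>
      Gbig m c₂ c₄ c₆ p.1 p.2.1 p.2.2.1 p.2.2.2) := by
    unfold Gbig; fun_prop
  have hGt : Tendsto (fun σ => Gbig m c₂ c₄ c₆ (1/σ) (a σ) (b σ) (c σ)) atTop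
      (nhds (Gbig m c₂ c₄ c₆ 0 0 0 0)) := by
    have hxt : Tendsto (fun σ : ℝ => (1/σ, a σ, b σ, c σ)) atTop
        (nhds ((0 : ℝ), (0 : ℝ), (0 : ℝ), (0 : ℝ))) := by
      rw [nhds_prod_eq, nhds_prod_eq, nhds_prod_eq]
      exact hx.prodMk (ha.prodMk (hb.prodMk hc))
    exact (hcont.tendsto (0, 0, 0, 0)).comp hxt
  have heq : (fun σ : ℝ => -(σ^2 * A₆)) =ᶠ[atTop]
      (fun σ => Gbig m c₂ c₄ c₆ (1/σ) (a σ) (b σ) (c σ)) := by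
    filter_upwards [hev, eventually_gt_atTop σ₁] with σ hσ hσ1
    have hσ0 : σ ≠ 0 := ne_of_gt hσ
    have hFop : V σ * deriv (deriv V) σ - (1/2) * (deriv V σ)^2
        + ((m - V σ) / σ) * deriv V σ + (2*m / σ^2) * V σ * (1 - V σ) = 0 := by
      have := hF σ (mem_Ioi.mpr hσ1)
      rw [Fop] at this
      rw [hm_def]
      linarith [this]
    have hk := key_ident m c₂ c₄ c₆ σ (V σ) (deriv V σ) (deriv (deriv V) σ) hσ0
    rw [hFop] at hk
    simp only [ha_def, hb_def, hc_def, hA6_def]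
    rw [← hk]; ring
  have hlim : Tendsto (fun σ : ℝ => -(σ^2 * A₆)) atTop
      (nhds (Gbig m c₂ c₄ c₆ 0 0 0 0)) := hGt.congr' heq.symm
  have hx2 : Tendsto (fun σ : ℝ => 1/σ^2) atTop (nhds 0) := by
    have := hx.mul hx
    simp only [mul_zero] at this
    refine this.congr (fun σ => ?_)
    ring
  have hA6 : A₆ = 0 := by
    have h1' := hlim.mul hx2
    rw [mul_zero] at h1'
    have h2' : (fun σ : ℝ => -(σ^2 * A₆) * (1/σ^2)) =ᶠ[atTop] (fun _ => -A₆) := by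
      filter_upwards [hev] with σ hσ
      field_simp
    have h3' : Tendsto (fun _ : ℝ => -A₆) atTop (nhds 0) := h1'.congr' h2'
    have h4' := tendsto_nhds_unique h3' (tendsto_const_nhds : Tendsto (fun _ : ℝ => -A₆) atTop (nhds (-A₆)))
    linarith [h4']
  have hA8 : Gbig m c₂ c₄ c₆ 0 0 0 0 = 0 := by
    have h0' : Tendsto (fun σ : ℝ => -(σ^2 * A₆)) atTop (nhds 0) := by
      have : (fun σ : ℝ => -(σ^2 * A₆)) = fun _ => 0 := by
        funext σ; rw [hA6]; ring
      rw [this]; exact tendsto_const_nhds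
    exact (tendsto_nhds_unique h0' hlim).symm
  have hG0 : Gbig m c₂ c₄ c₆ 0 0 0 0 = 24*c₂*c₄ - 4*m*c₆ - 4*m*c₂*c₄ := by
    unfold Gbig; ring
  have e6 : 6*c₂^2 - 2*m*c₄ - 2*m*c₂^2 = 0 := by rw [← hA6_def]; exact hA6
  have e8 : 24*c₂*c₄ - 4*m*c₆ - 4*m*c₂*c₄ = 0 := by rw [← hG0]; exact hA8
  constructor
  · rw [hn']
    field_simp
    linear_combination (-(1:ℝ)/2) * e6
  · rw [hn']
    field_simp
    linear_combination (-(m:ℝ)/4) * e8 + (-(6-m)*c₂/2) * e6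
end

section
/- Let n ≥ 2 be an integer and let V : (0, ∞) → ℝ be a smooth function satisfying F[V] = 0 on (0, ∞). Then the function φ(σ) = σ·V'(σ) satisfies the linearized equation dF_V[φ](σ) = 0 for all σ > 0. -/
open Real Set Filter

/-- Key algebraic identity: the linearized operator applied to `σ V'` equals
`σ (F[V])' + 2 F[V]`, so it vanishes when both `F[V]` and its derivative vanish. -/
lemma stmt16_key (x v v1 v2 v3 m : ℝ) (hx : x ≠ 0)
    (h1 : v*v2 - (1/2)*v1^2 + ((m - v)/x)*v1 + (2*m/x^2)*v*(1-v) = 0)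
    (h2 : v1*v2 + v*v3 - v1*v2 - v1^2/x - m*v1/x^2 + v*v1/x^2 + (m-v)*v2/x
      - 4*m/x^3*(v*(1-v)) + 2*m/x^2*(v1*(1-2*v)) = 0) :
    v * (2*v2 + x*v3) + ((m - v)/x - v1) * (v1 + x*v2)
      + (v2 - v1/x + 2*m/x^2*(1-2*v)) * (x*v1) = 0 := by
  have expand : v * (2*v2 + x*v3) + ((m - v)/x - v1) * (v1 + x*v2)
      + (v2 - v1/x + 2*m/x^2*(1-2*v)) * (x*v1)
      = x * (v1*v2 + v*v3 - v1*v2 - v1^2/x - m*v1/x^2 + v*v1/x^2 + (m-v)*v2/x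
      - 4*m/x^3*(v*(1-v)) + 2*m/x^2*(v1*(1-2*v)))
      + 2 * (v*v2 - (1/2)*v1^2 + ((m - v)/x)*v1 + (2*m/x^2)*v*(1-v)) := by
    field_simp
    ring
  rw [expand, h1, h2]
  ring

/-- If `F[V] = 0` on `(0, ∞)`, then `φ(σ) = σ V'(σ)` solves the linearized equation
`dF_V[φ] = 0` on `(0, ∞)`. -/
theorem stmt16 (n : ℕ) (hn : 2 ≤ n) (V : ℝ → ℝ)
    (hV : ContDiffOn ℝ (⊤ : ℕ∞) V (Ioi 0))
    (hF : ∀ σ ∈ Ioi (0:ℝ), Fop n V σ = 0) :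
    ∀ σ ∈ Ioi (0:ℝ), dFop n V (fun s => s * deriv V s) σ = 0 := by
  intro x hx
  have hx0 : (0:ℝ) < x := hx
  have hxne : x ≠ 0 := ne_of_gt hx0
  have hmem : Ioi (0:ℝ) ∈ nhds x := isOpen_Ioi.mem_nhds hx
  have hV1 : ContDiffOn ℝ (⊤ : ℕ∞) (deriv V) (Ioi 0) := hV.deriv_of_isOpen isOpen_Ioi (by simp)
  have hV2 : ContDiffOn ℝ (⊤ : ℕ∞) (deriv (deriv V)) (Ioi 0) := hV1.deriv_of_isOpen isOpen_Ioi (by simp)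
  have dV : ∀ s ∈ Ioi (0:ℝ), HasDerivAt V (deriv V s) s := fun s hs =>
    ((hV.differentiableOn (by simp)).differentiableAt (isOpen_Ioi.mem_nhds hs)).hasDerivAt
  have dV1 : ∀ s ∈ Ioi (0:ℝ), HasDerivAt (deriv V) (deriv (deriv V) s) s := fun s hs =>
    ((hV1.differentiableOn (by simp)).differentiableAt (isOpen_Ioi.mem_nhds hs)).hasDerivAt
  have dV2 : HasDerivAt (deriv (deriv V)) (deriv (deriv (deriv V)) x) x :=
    ((hV2.differentiableOn (by simp)).differentiableAt hmem).hasDerivAt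
  set v := V x with hv
  set v1 := deriv V x with hv1
  set v2 := deriv (deriv V) x with hv2
  set v3 := deriv (deriv (deriv V)) x with hv3
  set m : ℝ := (n:ℝ) - 1 with hm
  -- derivative of φ on Ioi 0
  have dφ : ∀ s ∈ Ioi (0:ℝ), HasDerivAt (fun t => t * deriv V t)
      (deriv V s + s * deriv (deriv V) s) s := by
    intro s hs
    have h := (hasDerivAt_id s).mul (dV1 s hs)
    simpa [one_mul, Pi.mul_def] using h
  have hderivφ : deriv (fun t => t * deriv V t) x = v1 + x * v2 := (dφ x hx).deriv
  have hdd : deriv (deriv (fun t => t * deriv V t)) x = 2 * v2 + x * v3 := by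
    have hev : deriv (fun t => t * deriv V t) =ᶠ[nhds x]
        (fun s => deriv V s + s * deriv (deriv V) s) :=
      Filter.eventuallyEq_of_mem hmem (fun s hs => (dφ s hs).deriv)
    rw [hev.deriv_eq]
    have h2 : HasDerivAt (fun s => deriv V s + s * deriv (deriv V) s)
        (v2 + (v2 + x * v3)) x := by
      have hb : HasDerivAt (fun s => s * deriv (deriv V) s) (v2 + x * v3) x := by
        have := (hasDerivAt_id x).mul dV2
        simpa [one_mul, Pi.mul_def] using this
      exact (dV1 x hx).add hb
    rw [h2.deriv]; ring
  -- derivative of Fop n V at x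
  have dF : HasDerivAt (Fop n V)
      (v1 * v2 + v * v3 - v1 * v2
        - v1 ^ 2 / x - m * v1 / x ^ 2 + v * v1 / x ^ 2 + (m - v) * v2 / x
        - 4 * m / x ^ 3 * (v * (1 - v)) + 2 * m / x ^ 2 * (v1 * (1 - 2 * v))) x := by
    have t1 : HasDerivAt (fun r => V r * deriv (deriv V) r) (v1 * v2 + v * v3) x :=
      (dV x hx).mul dV2
    have t2 : HasDerivAt (fun r => (1/2) * (deriv V r)^2) ((1/2) * (2 * v1 * v2)) x := by
      have := ((dV1 x hx).pow 2).const_mul (1/2 : ℝ)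
      simpa using this
    have t3a : HasDerivAt (fun r => (n:ℝ) - 1 - V r) (-v1) x := by
      simpa [Pi.sub_def] using (hasDerivAt_const x ((n:ℝ) - 1)).sub (dV x hx)
    have t3b : HasDerivAt (fun r => ((n:ℝ) - 1 - V r) / r)
        ((-v1 * x - ((n:ℝ) - 1 - v) * 1) / x ^ 2) x := t3a.div (hasDerivAt_id x) hxne
    have t3 : HasDerivAt (fun r => (((n:ℝ) - 1 - V r) / r) * deriv V r)
        (((-v1 * x - ((n:ℝ) - 1 - v) * 1) / x ^ 2) * v1 + (((n:ℝ) - 1 - v) / x) * v2) x :=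
      t3b.mul (dV1 x hx)
    have t4a : HasDerivAt (fun r : ℝ => 2 * ((n:ℝ) - 1) / r ^ 2)
        ((0 * x ^ 2 - 2 * ((n:ℝ) - 1) * (2 * x ^ 1)) / (x ^ 2) ^ 2) x :=
      (hasDerivAt_const x (2 * ((n:ℝ) - 1))).div (hasDerivAt_pow 2 x) (pow_ne_zero 2 hxne)
    have t4b : HasDerivAt (fun r => 2 * ((n:ℝ) - 1) / r ^ 2 * V r)
        ((0 * x ^ 2 - 2 * ((n:ℝ) - 1) * (2 * x ^ 1)) / (x ^ 2) ^ 2 * v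
          + 2 * ((n:ℝ) - 1) / x ^ 2 * v1) x := t4a.mul (dV x hx)
    have t4c : HasDerivAt (fun r : ℝ => 1 - V r) (-v1) x := by
      simpa [Pi.sub_def] using (hasDerivAt_const x (1:ℝ)).sub (dV x hx)
    have t4 : HasDerivAt (fun r => 2 * ((n:ℝ) - 1) / r ^ 2 * V r * (1 - V r))
        (((0 * x ^ 2 - 2 * ((n:ℝ) - 1) * (2 * x ^ 1)) / (x ^ 2) ^ 2 * v
          + 2 * ((n:ℝ) - 1) / x ^ 2 * v1) * (1 - v)
          + 2 * ((n:ℝ) - 1) / x ^ 2 * v * (-v1)) x := t4b.mul t4c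
    have total := ((t1.sub t2).add t3).add t4
    have hFopEq : Fop n V = fun r => V r * deriv (deriv V) r - (1/2) * (deriv V r)^2
        + (((n : ℝ) - 1 - V r) / r) * deriv V r
        + (2 * ((n : ℝ) - 1) / r^2) * V r * (1 - V r) := rfl
    rw [hFopEq]
    refine total.congr_deriv ?_
    rw [hm]
    field_simp
    ring
  have hE0 : (v1 * v2 + v * v3 - v1 * v2
        - v1 ^ 2 / x - m * v1 / x ^ 2 + v * v1 / x ^ 2 + (m - v) * v2 / x
        - 4 * m / x ^ 3 * (v * (1 - v)) + 2 * m / x ^ 2 * (v1 * (1 - 2 * v))) = 0 := by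
    have hev : Fop n V =ᶠ[nhds x] (fun _ => (0:ℝ)) := Filter.eventuallyEq_of_mem hmem hF
    rw [← dF.deriv, hev.deriv_eq, deriv_const]
  have hF0 : v * v2 - (1/2) * v1^2 + ((m - v) / x) * v1 + (2 * m / x^2) * v * (1 - v) = 0 := by
    have hFx := hF x hx
    rw [Fop] at hFx
    rw [hm]
    convert hFx using 2 <;> ring
  have key := stmt16_key x v v1 v2 v3 m hxne hF0 hE0
  rw [dFop, hderivφ, hdd]
  simp only [← hv, ← hv1, ← hv2, ← hv3, ← hm]
  convert key using 2 <;> ring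
end

section
/- Let c > 0 and s₀ ∈ (0, 1), and let ψ : (0, s₀) → (0, ∞) be a continuously differentiable function that is increasing and convex (i.e., ψ' ≥ 0 and ψ' is nondecreasing), and suppose ψ(s)·√(−log s)/s → c as s → 0⁺. Then ψ'(s)·√(−log s) → c as s → 0⁺. -/
/-!
The weight `L s = √(-log s)` varies slowly at `0⁺`: `L (a s) / L s → 1` for every `a > 0`.
Hence `ψ s · L s / s → c` gives `ψ (a s) · L s / s → a c`, so the secant slopes of `ψ` over
`[s/2, s]` and `[s, 2s]`, multiplied by `L s`, both tend to `c`. By convexity `ψ' s` lies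
between these two slopes.
-/

open Real Set Filter Topology

def SlowlyVaryingAtZero (L : ℝ → ℝ) : Prop :=
  ∀ a : ℝ, 0 < a → Tendsto (fun s => L (a * s) / L s) (𝓝[>] 0) (𝓝 1)

lemma slowlyVaryingAtZero_sqrt_neg_log : SlowlyVaryingAtZero fun s => √(-log s) := by
  intro a ha
  have hlog : Tendsto (fun s : ℝ => -log s) (𝓝[>] 0) atTop :=
    tendsto_neg_atBot_atTop.comp tendsto_log_nhdsGT_zero
  have hratio : Tendsto (fun s : ℝ => 1 + -log a / -log s) (𝓝[>] 0) (𝓝 1) := by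
    simpa only [add_zero] using
      (tendsto_const_nhds (x := (1 : ℝ))).add ((tendsto_const_nhds (x := -log a)).div_atTop hlog)
  have hsqrt : Tendsto (fun s : ℝ => √(1 + -log a / -log s)) (𝓝[>] 0) (𝓝 1) := by
    simpa only [sqrt_one] using hratio.sqrt
  refine hsqrt.congr' ?_
  filter_upwards [Ioo_mem_nhdsGT zero_lt_one] with s ⟨hs0, hs1⟩
  have hlog_pos : 0 < -log s := neg_pos.2 (log_neg hs0 hs1)
  have hlog_ne : log s ≠ 0 := (log_neg hs0 hs1).ne
  rw [← sqrt_div' _ hlog_pos.le, log_mul ha.ne' hs0.ne']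
  congr 1
  field_simp
  ring

section SlowlyVarying

variable {ψ L : ℝ → ℝ} {c : ℝ}

lemma SlowlyVaryingAtZero.tendsto_comp_mul_mul_div (hL : SlowlyVaryingAtZero L)
    (h : Tendsto (fun s => ψ s * L s / s) (𝓝[>] 0) (𝓝 c)) {a : ℝ} (ha : 0 < a) :
    Tendsto (fun s => ψ (a * s) * L s / s) (𝓝[>] 0) (𝓝 (a * c)) := by
  have hinv : Tendsto (fun s => L s / L (a * s)) (𝓝[>] 0) (𝓝 1) := by
    simpa using (hL a ha).inv₀ one_ne_zero
  have hcomp := h.comp (tendsto_iff_comap.2 (comap_mulLeft_nhdsGT_zero ha).ge)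
  have hlim := (tendsto_const_nhds (x := a)).mul (hcomp.mul hinv)
  rw [mul_one] at hlim
  refine hlim.congr' ?_
  filter_upwards [self_mem_nhdsWithin, (hL a ha).eventually_ne one_ne_zero] with s hs hne
  have hLa : L (a * s) ≠ 0 := (div_ne_zero_iff.1 hne).1
  have hs : s ≠ 0 := ne_of_gt hs
  simp only [Function.comp_apply]
  field_simp

lemma SlowlyVaryingAtZero.tendsto_slope_mul (hL : SlowlyVaryingAtZero L)
    (h : Tendsto (fun s => ψ s * L s / s) (𝓝[>] 0) (𝓝 c)) {a b : ℝ} (ha : 0 < a) (hab : a < b) :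
    Tendsto (fun s => slope ψ (a * s) (b * s) * L s) (𝓝[>] 0) (𝓝 c) := by
  have hlim := ((hL.tendsto_comp_mul_mul_div h (ha.trans hab)).sub
    (hL.tendsto_comp_mul_mul_div h ha)).div_const (b - a)
  rw [← sub_mul, mul_div_cancel_left₀ _ (sub_ne_zero.2 hab.ne')] at hlim
  refine hlim.congr' ?_
  filter_upwards [self_mem_nhdsWithin] with s (hs : 0 < s)
  have hba : b - a ≠ 0 := sub_ne_zero.2 hab.ne'
  rw [slope_def_field, ← sub_mul]
  field_simp

theorem ConvexOn.tendsto_deriv_mul_of_slowlyVaryingAtZero {s₀ : ℝ} (hs₀ : 0 < s₀)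
    (hψ : ConvexOn ℝ (Ioo 0 s₀) ψ) (hdiff : DifferentiableOn ℝ ψ (Ioo 0 s₀))
    (hL : SlowlyVaryingAtZero L) (hL_nonneg : ∀ᶠ s in 𝓝[>] 0, 0 ≤ L s)
    (h : Tendsto (fun s => ψ s * L s / s) (𝓝[>] 0) (𝓝 c)) :
    Tendsto (fun s => deriv ψ s * L s) (𝓝[>] 0) (𝓝 c) := by
  have hlower := hL.tendsto_slope_mul h (a := 1 / 2) (by norm_num) (by norm_num : (1 / 2 : ℝ) < 1)
  have hupper := hL.tendsto_slope_mul h one_pos (by norm_num : (1 : ℝ) < 2)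
  simp only [one_mul] at hlower hupper
  have hsandwich : ∀ᶠ s in 𝓝[>] 0, slope ψ (1 / 2 * s) s * L s ≤ deriv ψ s * L s ∧
      deriv ψ s * L s ≤ slope ψ s (2 * s) * L s := by
    filter_upwards [Ioo_mem_nhdsGT (half_pos hs₀), hL_nonneg] with s ⟨hs0, hs⟩ hLs
    have hmem : ∀ t, 0 < t → t ≤ 2 * s → t ∈ Ioo 0 s₀ := fun t ht hts => ⟨ht, by linarith⟩
    have hdiff_s : DifferentiableAt ℝ ψ s := hdiff.differentiableAt (Ioo_mem_nhds hs0 (by linarith))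
    exact ⟨mul_le_mul_of_nonneg_right (hψ.slope_le_deriv (hmem _ (by positivity) (by linarith))
        (hmem _ hs0 (by linarith)) (by linarith) hdiff_s) hLs,
      mul_le_mul_of_nonneg_right (hψ.deriv_le_slope (hmem _ hs0 (by linarith))
        (hmem _ (by positivity) le_rfl) (by linarith) hdiff_s) hLs⟩
  exact tendsto_of_tendsto_of_tendsto_of_le_of_le' hlower hupper
    (hsandwich.mono fun _ => And.left) (hsandwich.mono fun _ => And.right)

end SlowlyVarying

theorem stmt19_general (c : ℝ) (s₀ : ℝ) (hs₀ : s₀ ∈ Ioo (0:ℝ) 1)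
    (ψ : ℝ → ℝ)
    (hψ : ContDiffOn ℝ 1 ψ (Ioo 0 s₀))
    (hconv : MonotoneOn (deriv ψ) (Ioo 0 s₀))
    (hasymp : Tendsto (fun x => ψ x * Real.sqrt (-Real.log x) / x)
      (nhdsWithin 0 (Ioi 0)) (nhds c)) :
    Tendsto (fun x => deriv ψ x * Real.sqrt (-Real.log x))
      (nhdsWithin 0 (Ioi 0)) (nhds c) := by
  have hdiff : DifferentiableOn ℝ ψ (Ioo 0 s₀) := hψ.differentiableOn one_ne_zero
  have hconvex : ConvexOn ℝ (Ioo 0 s₀) ψ :=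
    MonotoneOn.convexOn_of_deriv (convex_Ioo 0 s₀) hdiff.continuousOn (by rwa [interior_Ioo])
      (by rwa [interior_Ioo])
  exact hconvex.tendsto_deriv_mul_of_slowlyVaryingAtZero hs₀.1 hdiff
    slowlyVaryingAtZero_sqrt_neg_log (Eventually.of_forall fun _ => sqrt_nonneg _) hasymp

/-- Differentiating the neckpinch asymptotics: if `ψ` is `C¹`, positive, increasing and
convex on `(0, s₀)` with `ψ(s)√(-log s)/s → c` as `s → 0⁺`, then
`ψ'(s)√(-log s) → c` as `s → 0⁺`. -/
theorem stmt19 (c : ℝ) (hc : 0 < c) (s₀ : ℝ) (hs₀ : s₀ ∈ Ioo (0:ℝ) 1)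
    (ψ : ℝ → ℝ)
    (hψ : ContDiffOn ℝ 1 ψ (Ioo 0 s₀))
    (hpos : ∀ x ∈ Ioo (0:ℝ) s₀, 0 < ψ x)
    (hd : ∀ x ∈ Ioo (0:ℝ) s₀, 0 ≤ deriv ψ x)
    (hconv : MonotoneOn (deriv ψ) (Ioo 0 s₀))
    (hasymp : Tendsto (fun x => ψ x * Real.sqrt (-Real.log x) / x)
      (nhdsWithin 0 (Ioi 0)) (nhds c)) :
    Tendsto (fun x => deriv ψ x * Real.sqrt (-Real.log x))
      (nhdsWithin 0 (Ioi 0)) (nhds c) :=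
  stmt19_general c s₀ hs₀ ψ hψ hconv hasymp
end
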